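/- arXiv:2604.15582 — 2 statements merged into one kernel-verified Lean document; each statement's English description precedes it below -/
import Mathlib

section
/- Let (W,S) be a Coxeter system, let 𝔬 be a set of monodromy parameters, and let h be a reflection-stable Abe realization of W over an integral domain k. Then for every L ∈ 𝔬, h is an Abe realization for the endoscopic Coxeter system (W_L°, S_L°): for every reflection datum for the reflection subgroup W_L° with its canonical generating set S_L°, and for all distinct s′,t′ ∈ S_L° such that m′ := (order of s′t′) is finite, one has binom(m′,k)_x(a_{s′,t′}, a_{t′,s′}) = 0 = binom(m′,k)_y(a_{s′,t′}, a_{t′,s′}) for all 1 ≤ k ≤ m′−1, where a_{s′,t′} = ⟨α_{s′}∨, α_{t′}⟩ are the Cartan pairings determined by the datum. -/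
/-!
Statement 13: a reflection-stable Abe realization of `(W,S)` is an Abe realization for the
endoscopic Coxeter system `(W_L°, S_L°)` for every monodromy parameter `L ∈ 𝔬`.
-/

attribute [local instance] Classical.propDecidable

noncomputable section

namespace PaperStmt

/-- `ℤ[x,y]`. -/
abbrev A2 : Type := MvPolynomial (Fin 2) ℤ

/-- The variable `x`. -/
def varX : A2 := MvPolynomial.X 0

/-- The variable `y`. -/
def varY : A2 := MvPolynomial.X 1

/-- The pair of two-colored quantum numbers `([n]_x, [n]_y)` for `n ∈ ℕ`. -/
def qPair : ℕ → A2 × A2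
  | 0 => (0, 0)
  | 1 => (1, 1)
  | n + 2 =>
      (varX * (qPair (n + 1)).2 - (qPair n).1,
        varY * (qPair (n + 1)).1 - (qPair n).2)

/-- The two-colored quantum number `[n]_x`, `n ∈ ℤ` (the recursions of the paper, used in both
directions, force `[-n]_x = -[n]_x`). -/
def qX (n : ℤ) : A2 := if 0 ≤ n then (qPair n.toNat).1 else -(qPair (-n).toNat).1

/-- The two-colored quantum number `[n]_y`, `n ∈ ℤ`. -/
def qY (n : ℤ) : A2 := if 0 ≤ n then (qPair n.toNat).2 else -(qPair (-n).toNat).2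

/-- The `d`-twisted variable `x(d) = [d+1]_x − [d−1]_x`. -/
def twX (d : ℤ) : A2 := qX (d + 1) - qX (d - 1)

/-- The `d`-twisted variable `y(d) = [d+1]_y − [d−1]_y`. -/
def twY (d : ℤ) : A2 := qY (d + 1) - qY (d - 1)
/-- Substitution `x ↦ x(d), y ↦ y(d)` in `ℤ[x,y]`. -/
def twist (d : ℤ) (p : A2) : A2 := MvPolynomial.aeval ![twX d, twY d] p

/-- The two-colored quantum binomial coefficient `binom(n,j)_x`: the unique element of
`ℤ[x,y]` whose product with `[1]_x [2]_x ⋯ [j]_x` is `[n]_x [n−1]_x ⋯ [n−j+1]_x`. -/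
def qbinomX (n j : ℕ) : A2 :=
  if h : ∃ p : A2,
      p * ∏ i ∈ Finset.range j, qX ((i : ℤ) + 1) =
        ∏ i ∈ Finset.range j, qX ((n : ℤ) - (i : ℤ)) then
    h.choose
  else 0

/-- The two-colored quantum binomial coefficient `binom(n,j)_y`. -/
def qbinomY (n j : ℕ) : A2 :=
  if h : ∃ p : A2,
      p * ∏ i ∈ Finset.range j, qY ((i : ℤ) + 1) =
        ∏ i ∈ Finset.range j, qY ((n : ℤ) - (i : ℤ)) then
    h.choose
  else 0

/-- Evaluation `p(a,b)` of `p ∈ ℤ[x,y]` in a commutative ring, at `x ↦ a`, `y ↦ b`. -/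
def pev {k : Type*} [CommRing k] (a b : k) (p : A2) : k := MvPolynomial.aeval ![a, b] p
variable {B W : Type*} [Group W] {M : CoxeterMatrix B}

/-- A pre-realization of the Coxeter system `cs` over `k`: a `k`-module `V` with simple
coroots in `V` and simple roots in the dual `V* = Module.Dual k V`, such that the pairing of
each simple root with its coroot is `2`, the formula `s(v) = v − ⟨v, α_s⟩ α_s∨` defines a
representation `rep` of `W` on `V`, and each simple root is surjective onto `k`
(Demazure surjectivity). -/
structure PreRealization (cs : CoxeterSystem M W) (k V : Type*)
    [CommRing k] [AddCommGroup V] [Module k V] where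
  coroot : B → V
  root : B → Module.Dual k V
  rep : W →* Module.End k V
  root_coroot_eq_two : ∀ i : B, root i (coroot i) = 2
  rep_simple : ∀ (i : B) (v : V), rep (cs.simple i) v = v - root i v • coroot i
  root_surjective : ∀ i : B, Function.Surjective ⇑(root i)

variable {k V : Type*} [CommRing k] [AddCommGroup V] [Module k V] {cs : CoxeterSystem M W}

/-- The contragredient action of `W` on the dual `V*`. -/
def dAct (R : PreRealization cs k V) (w : W) (f : Module.Dual k V) : Module.Dual k V :=
  f.comp (R.rep w⁻¹)

/-- The canonical (Deodhar–Dyer) generating set of a subset `A ⊆ W`: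
`{t ∈ ℛ(W) : N(t) ∩ A = {t}}` where `N(x) = {r ∈ ℛ(W) : ℓ(xr) < ℓ(x)}`. -/
def canonicalGens (cs : CoxeterSystem M W) (A : Set W) : Set W :=
  {t : W | cs.IsReflection t ∧
    ({r : W | cs.IsReflection r ∧ cs.length (t * r) < cs.length t} ∩ A) = {t}}

/-- `W'` is a reflection subgroup: it is generated by the reflections it contains. -/
def IsReflectionSubgroup (cs : CoxeterSystem M W) (W' : Subgroup W) : Prop :=
  W' = Subgroup.closure ((W' : Set W) ∩ {r : W | cs.IsReflection r})

/-- A reflection datum on a subset `A ⊆ W`: maps `w_•, r_•` with `t = w_t r_t w_t⁻¹` and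
`ℓ(w_t r_t) > ℓ(w_t)` for all `t ∈ A`. -/
def IsReflectionDatum (cs : CoxeterSystem M W) (A : Set W) (wm : W → W) (rm : W → B) : Prop :=
  ∀ t ∈ A, t = wm t * cs.simple (rm t) * (wm t)⁻¹ ∧
    cs.length (wm t) < cs.length (wm t * cs.simple (rm t))

/-- The root `α_t = w_t · α_{r_t}` attached to `t` by a reflection datum. -/
def datumRoot (R : PreRealization cs k V) (wm : W → W) (rm : W → B) (t : W) :
    Module.Dual k V :=
  dAct R (wm t) (R.root (rm t))

/-- The coroot `α_t∨ = w_t · α_{r_t}∨` attached to `t` by a reflection datum. -/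
def datumCoroot (R : PreRealization cs k V) (wm : W → W) (rm : W → B) (t : W) : V :=
  R.rep (wm t) (R.coroot (rm t))

/-- The Cartan pairing `a_{t,t'} = ⟨α_t∨, α_{t'}⟩` attached to a reflection datum. -/
def cartan (R : PreRealization cs k V) (wm : W → W) (rm : W → B) (t t' : W) : k :=
  datumRoot R wm rm t' (datumCoroot R wm rm t)

/-- The Cartan entry `a_{s,t} = ⟨α_s∨, α_t⟩` for simple reflections. -/
def cartanS (R : PreRealization cs k V) (s t : B) : k := R.root t (R.coroot s)
/-- `R` is a reflection-stable Abe realization: for all distinct `s, t ∈ S` with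
`m = m_{s,t}` finite and every divisor `v > 1` of `m`, the `(m/v)`-twisted two-colored
quantum binomial coefficients `binom(v,j)`, `1 ≤ j ≤ v−1`, vanish at `(a_{s,t}, a_{t,s})`. -/
def ReflectionStable (cs : CoxeterSystem M W) {k V : Type*} [CommRing k] [AddCommGroup V]
    [Module k V] (R : PreRealization cs k V) : Prop :=
  ∀ s t : B, s ≠ t → orderOf (cs.simple s * cs.simple t) ≠ 0 →
    ∀ v : ℕ, 1 < v → v ∣ orderOf (cs.simple s * cs.simple t) →
      ∀ j : ℕ, 1 ≤ j → j ≤ v - 1 →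
        pev (cartanS R s t) (cartanS R t s)
            (twist ((orderOf (cs.simple s * cs.simple t) / v : ℕ) : ℤ) (qbinomX v j)) = 0 ∧
        pev (cartanS R s t) (cartanS R t s)
            (twist ((orderOf (cs.simple s * cs.simple t) / v : ℕ) : ℤ) (qbinomY v j)) = 0

variable {O : Type*}

/-- The map `b_L` on words: a letter of the word is deleted exactly when it does not change
the monodromy parameter. -/
def bword (cs : CoxeterSystem M W) (act : O → W → O) : O → List B → W
  | _, [] => 1
  | L, i :: ω =>
      (if act L (cs.simple i) = L then 1 else cs.simple i) *
        bword cs act (act L (cs.simple i)) ω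

/-- The endoscopic group `W_L° = {w ∈ W_L : b_L(w) = e}`, as a subset of `W`. -/
def WLcirc (act : O → W → O) (L : O) (b : W → W) : Set W :=
  {w : W | act L w = L ∧ b w = 1}

/-- The monodromic length `ℓ_L(w) = ℓ(w) − ℓ(b_L(w))`. -/
def ellL (cs : CoxeterSystem M W) (b : W → W) (w : W) : ℕ :=
  cs.length w - cs.length (b w)

/-- The set of endosimple reflections `S_L° = {w ∈ W_L° : ℓ_L(w) = 1}`. -/
def SLcirc (cs : CoxeterSystem M W) (act : O → W → O) (L : O) (b : W → W) : Set W :=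
  {w : W | w ∈ WLcirc act L b ∧ ellL cs b w = 1}
/-! ### Part P : polynomial lemmas -/

section PolyPart
open MvPolynomial LaurentPolynomial

lemma qPair_zero : qPair 0 = (0, 0) := rfl
lemma qPair_one : qPair 1 = (1, 1) := rfl
lemma qPair_add_two (n : ℕ) :
    qPair (n + 2) = (varX * (qPair (n + 1)).2 - (qPair n).1,
      varY * (qPair (n + 1)).1 - (qPair n).2) := rfl

/-- Evaluation at `(2,2)`. -/
noncomputable def ev2 : A2 →+* ℤ := (MvPolynomial.aeval (fun _ : Fin 2 => (2:ℤ))).toRingHom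

lemma ev2_varX : ev2 varX = 2 := by simp [ev2, varX]
lemma ev2_varY : ev2 varY = 2 := by simp [ev2, varY]

lemma ev2_qPair : ∀ n : ℕ, ev2 (qPair n).1 = n ∧ ev2 (qPair n).2 = n
  | 0 => by simp [qPair_zero]
  | 1 => by simp [qPair_one]
  | (n+2) => by
      have h1 := ev2_qPair (n+1)
      have h0 := ev2_qPair n
      rw [qPair_add_two]
      constructor
      · show ev2 (varX * (qPair (n+1)).2 - (qPair n).1) = ((n:ℤ) + 2)
        rw [map_sub, map_mul, ev2_varX, h1.2, h0.1]; push_cast; ring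
      · show ev2 (varY * (qPair (n+1)).1 - (qPair n).2) = ((n:ℤ) + 2)
        rw [map_sub, map_mul, ev2_varY, h1.1, h0.2]; push_cast; ring

lemma qX_natCast (m : ℕ) : qX (m : ℤ) = (qPair m).1 := by
  simp [qX]

lemma qY_natCast (m : ℕ) : qY (m : ℤ) = (qPair m).2 := by
  simp [qY]

lemma qPair_fst_ne_zero {m : ℕ} (hm : 1 ≤ m) : (qPair m).1 ≠ 0 := by
  intro h
  have h2 := (ev2_qPair m).1
  rw [h, map_zero] at h2
  exact_mod_cast absurd h2.symm (by omega)

lemma qPair_snd_ne_zero {m : ℕ} (hm : 1 ≤ m) : (qPair m).2 ≠ 0 := by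
  intro h
  have h2 := (ev2_qPair m).2
  rw [h, map_zero] at h2
  exact_mod_cast absurd h2.symm (by omega)

/-- The Laurent polynomial ring over `A2` used for the grading/scaling trick. -/
noncomputable abbrev K2 : Type := LaurentPolynomial A2

noncomputable def sig : A2 →ₐ[ℤ] K2 :=
  MvPolynomial.aeval ![(T 1 : K2) * LaurentPolynomial.C varX,
    (T (-1) : K2) * LaurentPolynomial.C varY]

lemma sig_varX : sig varX = T 1 * LaurentPolynomial.C varX := by
  simp [sig, varX]

lemma sig_varY : sig varY = T (-1) * LaurentPolynomial.C varY := by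
  simp [sig, varY]

lemma TC_mul (m n : ℤ) (p q : A2) :
    (T m * LaurentPolynomial.C p) * (T n * LaurentPolynomial.C q)
      = T (m + n) * LaurentPolynomial.C (p * q) := by
  rw [T_add, map_mul]; ring

/-- parity exponent -/
def epar (n : ℕ) : ℤ := if Even n then 1 else 0

lemma sig_qPair : ∀ n : ℕ,
    sig (qPair n).1 = T (epar n) * LaurentPolynomial.C (qPair n).1 ∧
    sig (qPair n).2 = T (-(epar n)) * LaurentPolynomial.C (qPair n).2
  | 0 => by
      constructor <;> simp [qPair_zero]
  | 1 => by
      have h : epar 1 = 0 := by simp [epar]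
      constructor <;> simp [qPair_one, h]
  | (n+2) => by
      have h1 := sig_qPair (n+1)
      have h0 := sig_qPair n
      rw [qPair_add_two]
      have hpar : ∀ m : ℕ, ¬ Even m → epar m = 0 := fun m hm => if_neg hm
      have hpar' : ∀ m : ℕ, Even m → epar m = 1 := fun m hm => if_pos hm
      have he2 : epar (n+2) = epar n := by
        unfold epar; congr 1; simp [Nat.even_add]
      have hsum1 : (1 : ℤ) + -(epar (n+1)) = epar (n+2) := by
        rcases Nat.even_or_odd n with h | h
        · rw [hpar (n+1) (by simp [Nat.even_add_one, h]), he2, hpar' n h]; ring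
        · rw [hpar' (n+1) (by simp [Nat.even_add_one, Nat.not_even_iff_odd, h]), he2,
            hpar n (Nat.not_even_iff_odd.mpr h)]; ring
      have hsum2 : (-1 : ℤ) + (epar (n+1)) = -epar (n+2) := by
        rcases Nat.even_or_odd n with h | h
        · rw [hpar (n+1) (by simp [Nat.even_add_one, h]), he2, hpar' n h]; ring
        · rw [hpar' (n+1) (by simp [Nat.even_add_one, Nat.not_even_iff_odd, h]), he2,
            hpar n (Nat.not_even_iff_odd.mpr h)]; ring
      dsimp only
      constructor
      · rw [map_sub, map_mul, sig_varX, h1.2, h0.1, TC_mul, hsum1, he2, map_sub, mul_sub]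
      · rw [map_sub, map_mul, sig_varY, h1.1, h0.2, TC_mul, hsum2, he2, map_sub, mul_sub]

lemma sig_prod_range (f : ℕ → A2) (d : ℕ → ℤ) (j : ℕ)
    (h : ∀ i, i < j → sig (f i) = T (d i) * LaurentPolynomial.C (f i)) :
    sig (∏ i ∈ Finset.range j, f i)
      = T (∑ i ∈ Finset.range j, d i) * LaurentPolynomial.C (∏ i ∈ Finset.range j, f i) := by
  induction j with
  | zero => simp
  | succ j ih =>
      rw [Finset.prod_range_succ, Finset.sum_range_succ, map_mul,
        ih (fun i hi => h i (by omega)), h j (by omega), TC_mul]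

lemma sig_eq_of_mul (q G F : A2) (dG dF : ℤ) (hG : G ≠ 0)
    (hsG : sig G = T dG * LaurentPolynomial.C G)
    (hsF : sig F = T dF * LaurentPolynomial.C F) (hq : q * G = F) :
    sig q = T (dF - dG) * LaurentPolynomial.C q := by
  have h1 : (sig q - T (dF - dG) * LaurentPolynomial.C q) * (T dG * LaurentPolynomial.C G) = 0 := by
    rw [sub_mul, TC_mul]
    have e1 : sig q * (T dG * LaurentPolynomial.C G) = T dF * LaurentPolynomial.C F := by
      rw [← hsG, ← map_mul, hq, hsF]
    rw [e1, ← hq, map_mul]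
    rw [show dF - dG + dG = dF by ring]
    ring
  have hT : (T dG : K2) ≠ 0 := (LaurentPolynomial.isUnit_T dG).ne_zero
  have hC : (LaurentPolynomial.C G : K2) ≠ 0 := by
    intro h
    apply hG
    have h2 : (AddMonoidAlgebra.single (0:ℤ) G : K2) = 0 := by
      rw [LaurentPolynomial.single_eq_C_mul_T, LaurentPolynomial.T_zero, mul_one, h]
    exact AddMonoidAlgebra.single_eq_zero.mp h2
  rcases mul_eq_zero.mp h1 with h | h
  · exact sub_eq_zero.mp h
  · exact absurd h (mul_ne_zero hT hC)

end PolyPart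

section PolyPart2
open MvPolynomial LaurentPolynomial

variable {k : Type*} [CommRing k]

noncomputable def pevR (a b : k) : A2 →+* k := (MvPolynomial.aeval ![a, b]).toRingHom

lemma pev_eq (a b : k) (p : A2) : pev a b p = pevR a b p := rfl

noncomputable def Psi (a b : k) (ν : kˣ) : K2 →+* k :=
  AddMonoidAlgebra.liftNCRingHom (pevR a b)
    ((Units.coeHom k).comp ((zpowersHom kˣ) ν)) (fun _ _ => Commute.all _ _)

lemma Psi_single (a b : k) (ν : kˣ) (n : ℤ) (p : A2) :
    Psi a b ν (AddMonoidAlgebra.single n p) = pev a b p * ↑(ν ^ n) := by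
  simp only [Psi, AddMonoidAlgebra.liftNCRingHom, RingHom.coe_mk, MonoidHom.coe_mk,
    OneHom.coe_mk, ZeroHom.toFun_eq_coe, AddMonoidHom.toFun_eq_coe, AddMonoidHom.coe_coe]
  erw [AddMonoidAlgebra.liftNC_single]
  simp [pev_eq, zpowersHom_apply]

lemma Psi_TC (a b : k) (ν : kˣ) (n : ℤ) (p : A2) :
    Psi a b ν (T n * LaurentPolynomial.C p) = pev a b p * ↑(ν ^ n) := by
  rw [mul_comm, ← LaurentPolynomial.single_eq_C_mul_T, Psi_single]

lemma Psi_sig (a b : k) (ν : kˣ) (p : A2) :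
    Psi a b ν (sig p) = pev (↑ν * a) (↑ν⁻¹ * b) p := by
  have hhom : (Psi a b ν).comp (sig : A2 →ₐ[ℤ] K2).toRingHom = pevR ((↑ν : k) * a) ((↑ν⁻¹ : k) * b) := by
    apply MvPolynomial.ringHom_ext
    · intro r
      have h1 : (MvPolynomial.C (r : ℤ) : A2) = ((r : ℤ) : A2) := by
        simp [MvPolynomial.C_eq_coe_nat]
      rw [h1, map_intCast, map_intCast]
    · intro i
      fin_cases i
      · show Psi a b ν (sig (MvPolynomial.X 0)) = pevR _ _ (MvPolynomial.X 0)
        have : sig (MvPolynomial.X 0) = T 1 * LaurentPolynomial.C varX := by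
          simp [sig]
        rw [this, Psi_TC]
        show pev a b varX * ↑(ν ^ (1:ℤ)) = MvPolynomial.aeval ![(↑ν : k) * a, _] (MvPolynomial.X 0)
        simp [pev, varX, mul_comm]
      · show Psi a b ν (sig (MvPolynomial.X 1)) = pevR _ _ (MvPolynomial.X 1)
        have : sig (MvPolynomial.X 1) = T (-1) * LaurentPolynomial.C varY := by
          simp [sig]
        rw [this, Psi_TC]
        show pev a b varY * ↑(ν ^ (-1:ℤ)) = MvPolynomial.aeval ![_, (↑ν⁻¹ : k) * b] (MvPolynomial.X 1)
        simp [pev, varY, mul_comm]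
  exact DFunLike.congr_fun hhom p

lemma pev_scale_core (a b : k) (ν : kˣ) (q G F : A2) (dG dF : ℤ) (hG : G ≠ 0)
    (hsG : sig G = T dG * LaurentPolynomial.C G)
    (hsF : sig F = T dF * LaurentPolynomial.C F) (hq : q * G = F) :
    pev ((↑ν : k) * a) ((↑ν⁻¹ : k) * b) q = ↑(ν ^ (dF - dG)) * pev a b q := by
  have h := sig_eq_of_mul q G F dG dF hG hsG hsF hq
  rw [← Psi_sig, h, Psi_TC, mul_comm]

lemma sig_prodX (n j : ℕ) (hj : j ≤ n) :
    (sig (∏ i ∈ Finset.range j, qX ((i:ℤ)+1))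
        = T (∑ i ∈ Finset.range j, epar (i+1)) * LaurentPolynomial.C (∏ i ∈ Finset.range j, qX ((i:ℤ)+1)))
    ∧ (sig (∏ i ∈ Finset.range j, qX ((n:ℤ)-(i:ℤ)))
        = T (∑ i ∈ Finset.range j, epar (n-i)) * LaurentPolynomial.C (∏ i ∈ Finset.range j, qX ((n:ℤ)-(i:ℤ)))) := by
  constructor
  · apply sig_prod_range
    intro i _
    rw [show ((i:ℤ)+1) = (((i+1 : ℕ)):ℤ) by push_cast; ring, qX_natCast]
    exact (sig_qPair (i+1)).1
  · apply sig_prod_range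
    intro i hi
    rw [show ((n:ℤ)-(i:ℤ)) = (((n-i : ℕ)):ℤ) by omega, qX_natCast]
    exact (sig_qPair (n-i)).1

lemma sig_prodY (n j : ℕ) (hj : j ≤ n) :
    (sig (∏ i ∈ Finset.range j, qY ((i:ℤ)+1))
        = T (∑ i ∈ Finset.range j, -epar (i+1)) * LaurentPolynomial.C (∏ i ∈ Finset.range j, qY ((i:ℤ)+1)))
    ∧ (sig (∏ i ∈ Finset.range j, qY ((n:ℤ)-(i:ℤ)))
        = T (∑ i ∈ Finset.range j, -epar (n-i)) * LaurentPolynomial.C (∏ i ∈ Finset.range j, qY ((n:ℤ)-(i:ℤ)))) := by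
  constructor
  · apply sig_prod_range
    intro i _
    rw [show ((i:ℤ)+1) = (((i+1 : ℕ)):ℤ) by push_cast; ring, qY_natCast]
    exact (sig_qPair (i+1)).2
  · apply sig_prod_range
    intro i hi
    rw [show ((n:ℤ)-(i:ℤ)) = (((n-i : ℕ)):ℤ) by omega, qY_natCast]
    exact (sig_qPair (n-i)).2

lemma prodX_ne_zero (j : ℕ) : (∏ i ∈ Finset.range j, qX ((i:ℤ)+1)) ≠ 0 := by
  intro h0
  have h1 := congrArg ev2 h0
  rw [map_prod, map_zero] at h1
  have hpos : ∀ i ∈ Finset.range j, (0:ℤ) < ev2 (qX ((i:ℤ)+1)) := by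
    intro i _
    rw [show ((i:ℤ)+1) = (((i+1 : ℕ)):ℤ) by push_cast; ring, qX_natCast, (ev2_qPair (i+1)).1]
    exact_mod_cast Nat.succ_pos i
  have := Finset.prod_pos hpos
  omega

lemma prodY_ne_zero (j : ℕ) : (∏ i ∈ Finset.range j, qY ((i:ℤ)+1)) ≠ 0 := by
  intro h0
  have h1 := congrArg ev2 h0
  rw [map_prod, map_zero] at h1
  have hpos : ∀ i ∈ Finset.range j, (0:ℤ) < ev2 (qY ((i:ℤ)+1)) := by
    intro i _
    rw [show ((i:ℤ)+1) = (((i+1 : ℕ)):ℤ) by push_cast; ring, qY_natCast, (ev2_qPair (i+1)).2]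
    exact_mod_cast Nat.succ_pos i
  have := Finset.prod_pos hpos
  omega

/-- scaling invariance of the vanishing of the quantum binomial coefficients -/
lemma pev_qbinomX_scale (n j : ℕ) (hj : j ≤ n) (a b : k) (ν : kˣ)
    (h : pev a b (qbinomX n j) = 0) :
    pev ((↑ν : k) * a) ((↑ν⁻¹ : k) * b) (qbinomX n j) = 0 := by
  by_cases hex : ∃ p : A2,
      p * ∏ i ∈ Finset.range j, qX ((i : ℤ) + 1) = ∏ i ∈ Finset.range j, qX ((n : ℤ) - (i : ℤ))
  · rw [qbinomX, dif_pos hex] at h ⊢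
    rw [pev_scale_core a b ν _ _ _ _ _ (prodX_ne_zero j) (sig_prodX n j hj).1
      (sig_prodX n j hj).2 hex.choose_spec, h, mul_zero]
  · rw [qbinomX, dif_neg hex]
    simp [pev]

lemma pev_qbinomY_scale (n j : ℕ) (hj : j ≤ n) (a b : k) (ν : kˣ)
    (h : pev a b (qbinomY n j) = 0) :
    pev ((↑ν : k) * a) ((↑ν⁻¹ : k) * b) (qbinomY n j) = 0 := by
  by_cases hex : ∃ p : A2,
      p * ∏ i ∈ Finset.range j, qY ((i : ℤ) + 1) = ∏ i ∈ Finset.range j, qY ((n : ℤ) - (i : ℤ))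
  · rw [qbinomY, dif_pos hex] at h ⊢
    rw [pev_scale_core a b ν _ _ _ _ _ (prodY_ne_zero j) (sig_prodY n j hj).1
      (sig_prodY n j hj).2 hex.choose_spec, h, mul_zero]
  · rw [qbinomY, dif_neg hex]
    simp [pev]

lemma qX_zero' : qX 0 = 0 := by
  rw [show (0:ℤ) = ((0:ℕ):ℤ) by norm_num, qX_natCast]; rfl

lemma qX_one' : qX 1 = 1 := by
  rw [show (1:ℤ) = ((1:ℕ):ℤ) by norm_num, qX_natCast]; rfl

lemma qY_zero' : qY 0 = 0 := by
  rw [show (0:ℤ) = ((0:ℕ):ℤ) by norm_num, qY_natCast]; rfl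

lemma qY_one' : qY 1 = 1 := by
  rw [show (1:ℤ) = ((1:ℕ):ℤ) by norm_num, qY_natCast]; rfl

lemma qX_two' : qX 2 = varX := by
  rw [show (2:ℤ) = ((2:ℕ):ℤ) by norm_num, qX_natCast]
  show varX * (qPair 1).2 - (qPair 0).1 = varX
  rw [qPair_one, qPair_zero]; ring

lemma qY_two' : qY 2 = varY := by
  rw [show (2:ℤ) = ((2:ℕ):ℤ) by norm_num, qY_natCast]
  show varY * (qPair 1).1 - (qPair 0).2 = varY
  rw [qPair_one, qPair_zero]; ring

lemma twist_one (p : A2) : twist 1 p = p := by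
  have h1 : twX 1 = varX := by unfold twX; norm_num [qX_two', qX_zero']
  have h2 : twY 1 = varY := by unfold twY; norm_num [qY_two', qY_zero']
  unfold twist
  rw [h1, h2, show ![varX, varY] = (MvPolynomial.X : Fin 2 → A2) by funext i; fin_cases i <;> rfl,
    MvPolynomial.aeval_X_left, AlgHom.id_apply]

lemma qbinomX_one (n : ℕ) : qbinomX n 1 = qX n := by
  have hex : ∃ p : A2,
      p * ∏ i ∈ Finset.range 1, qX ((i : ℤ) + 1) = ∏ i ∈ Finset.range 1, qX ((n : ℤ) - (i : ℤ)) := by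
    refine ⟨qX n, ?_⟩
    norm_num [Finset.prod_range_one, qX_one']
  rw [qbinomX, dif_pos hex]
  have hspec : hex.choose * ∏ i ∈ Finset.range 1, qX ((i:ℤ)+1)
      = ∏ i ∈ Finset.range 1, qX ((n:ℤ)-(i:ℤ)) := hex.choose_spec
  generalize hgen : hex.choose = c at hspec ⊢
  rw [Finset.prod_range_one, Finset.prod_range_one,
    show ((0:ℕ):ℤ)+1 = (1:ℤ) by norm_num,
    show ((n:ℤ) - ((0:ℕ):ℤ)) = (n:ℤ) by norm_num, qX_one', mul_one] at hspec
  exact hspec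

lemma qbinomY_one (n : ℕ) : qbinomY n 1 = qY n := by
  have hex : ∃ p : A2,
      p * ∏ i ∈ Finset.range 1, qY ((i : ℤ) + 1) = ∏ i ∈ Finset.range 1, qY ((n : ℤ) - (i : ℤ)) := by
    refine ⟨qY n, ?_⟩
    norm_num [Finset.prod_range_one, qY_one']
  rw [qbinomY, dif_pos hex]
  have hspec : hex.choose * ∏ i ∈ Finset.range 1, qY ((i:ℤ)+1)
      = ∏ i ∈ Finset.range 1, qY ((n:ℤ)-(i:ℤ)) := hex.choose_spec
  generalize hgen : hex.choose = c at hspec ⊢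
  rw [Finset.prod_range_one, Finset.prod_range_one,
    show ((0:ℕ):ℤ)+1 = (1:ℤ) by norm_num,
    show ((n:ℤ) - ((0:ℕ):ℤ)) = (n:ℤ) by norm_num, qY_one', mul_one] at hspec
  exact hspec

end PolyPart2

/-! ### Part C : the η-cocycle (inversion parity) machinery -/

section EtaPart
open CoxeterSystem

/-- Auxiliary group `(W → ZMod 2) ⋊ W` (conjugation action) carrying the inversion cocycle. -/
structure EtaG (W : Type*) where
  f : W → ZMod 2
  g : W

namespace EtaG

variable {W : Type*} [Group W]

instance : Mul (EtaG W) := ⟨fun a b => ⟨a.f + fun x => b.f (a.g⁻¹ * x * a.g), a.g * b.g⟩⟩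
instance : One (EtaG W) := ⟨⟨0, 1⟩⟩
instance : Inv (EtaG W) := ⟨fun a => ⟨fun x => a.f (a.g * x * a.g⁻¹), a.g⁻¹⟩⟩

@[simp] lemma mul_f (a b : EtaG W) (x : W) :
    (a * b).f x = a.f x + b.f (a.g⁻¹ * x * a.g) := rfl
@[simp] lemma mul_g (a b : EtaG W) : (a * b).g = a.g * b.g := rfl
@[simp] lemma one_f (x : W) : (1 : EtaG W).f x = 0 := rfl
@[simp] lemma one_g : (1 : EtaG W).g = 1 := rfl

lemma ext' {a b : EtaG W} (h1 : a.f = b.f) (h2 : a.g = b.g) : a = b := by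
  cases a; cases b; cases h1; cases h2; rfl

instance : Group (EtaG W) where
  mul_assoc a b c := by
    apply ext'
    · funext x
      simp [mul_assoc, mul_inv_rev, add_assoc]
    · simp [mul_assoc]
  one_mul a := by
    apply ext'
    · funext x; simp
    · simp
  mul_one a := by
    apply ext'
    · funext x; simp
    · simp
  inv_mul_cancel a := by
    apply ext'
    · funext x
      show a.f (a.g * x * a.g⁻¹) + a.f ((a.g⁻¹)⁻¹ * x * a.g⁻¹) = 0
      rw [inv_inv]
      exact CharTwo.add_self_eq_zero _
    · exact inv_mul_cancel a.g

lemma pow_f (A : W → ZMod 2) (z : W) (N : ℕ) :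
    (⟨A, z⟩ : EtaG W) ^ N
      = ⟨fun x => ∑ k ∈ Finset.range N, A ((z ^ k)⁻¹ * x * z ^ k), z ^ N⟩ := by
  induction N with
  | zero =>
      apply ext'
      · funext x; simp
      · simp
  | succ N ih =>
      rw [pow_succ, ih]
      apply ext'
      · funext x
        show _ = ∑ k ∈ Finset.range (N+1), A ((z ^ k)⁻¹ * x * z ^ k)
        rw [Finset.sum_range_succ]
        rfl
      · rw [mul_g, pow_succ]

end EtaG

variable {B W : Type*} [Group W] {M : CoxeterMatrix B} (cs : CoxeterSystem M W)

lemma conj_eq_iff (u v x : W) : u⁻¹ * x * u = v ↔ x = u * v * u⁻¹ := by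
  constructor
  · intro h; rw [← h]; group
  · intro h; rw [h]; group

private lemma sum_pair (g : ℕ → ZMod 2) (N : ℕ) :
    ∑ k ∈ Finset.range N, (g (2 * k) + g (2 * k + 1)) = ∑ m ∈ Finset.range (2 * N), g m := by
  induction N with
  | zero => simp
  | succ N ih =>
      rw [Finset.sum_range_succ, ih, show 2 * (N + 1) = 2 * N + 1 + 1 by ring,
        Finset.sum_range_succ, Finset.sum_range_succ]
      ring

private lemma sum_range_double (g : ℕ → ZMod 2) (N : ℕ) :
    ∑ m ∈ Finset.range (2 * N), g m
      = ∑ m ∈ Finset.range N, g m + ∑ m ∈ Finset.range N, g (N + m) := by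
  rw [two_mul, Finset.sum_range_add]

/-- generator images for the cocycle homomorphism -/
noncomputable def etaF (i : B) : EtaG W :=
  ⟨fun x => if x = cs.simple i then 1 else 0, cs.simple i⟩

lemma simple_conj_pow_inv (i j : B) (k : ℕ) :
    cs.simple i * ((cs.simple i * cs.simple j) ^ k)⁻¹
      = (cs.simple i * cs.simple j) ^ k * cs.simple i := by
  set z := cs.simple i * cs.simple j with hz
  induction k with
  | zero => simp
  | succ k ih =>
      have h1 : cs.simple i * z⁻¹ = z * cs.simple i := by
        rw [hz, mul_inv_rev, cs.inv_simple, cs.inv_simple, ← mul_assoc]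
      calc cs.simple i * (z ^ (k+1))⁻¹
          = (cs.simple i * z⁻¹) * (z ^ k)⁻¹ := by
            rw [pow_succ, mul_inv_rev, mul_assoc]
        _ = z * (cs.simple i * (z ^ k)⁻¹) := by rw [h1, mul_assoc]
        _ = z * (z ^ k * cs.simple i) := by rw [ih]
        _ = z ^ (k+1) * cs.simple i := by rw [← mul_assoc, ← pow_succ']

lemma etaF_liftable : M.IsLiftable (etaF cs) := by
  intro i j
  set si := cs.simple i with hsi
  set sj := cs.simple j with hsj
  set z := si * sj with hz
  have hmul : etaF cs i * etaF cs j
      = (⟨fun x => (if x = si then 1 else 0) + (if si⁻¹ * x * si = sj then 1 else 0), z⟩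
        : EtaG W) := rfl
  rw [hmul, EtaG.pow_f]
  have hzM : z ^ M.M i j = 1 := cs.simple_mul_simple_pow i j
  apply EtaG.ext'
  · funext x
    rw [show (1 : EtaG W).f x = 0 from rfl]
    dsimp only
    have hterm : ∀ k : ℕ,
        ((if (z ^ k)⁻¹ * x * z ^ k = si then (1:ZMod 2) else 0)
          + (if si⁻¹ * ((z ^ k)⁻¹ * x * z ^ k) * si = sj then (1:ZMod 2) else 0))
        = ((if x = z ^ (2*k) * si then (1:ZMod 2) else 0)
          + (if x = z ^ (2*k+1) * si then (1:ZMod 2) else 0)) := by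
      intro k
      have hc1 : z ^ k * si * (z ^ k)⁻¹ = z ^ (2*k) * si := by
        rw [mul_assoc, simple_conj_pow_inv cs i j k, ← mul_assoc, ← pow_add, two_mul]
      have hc2 : (z ^ k * si) * sj * (z ^ k * si)⁻¹ = z ^ (2*k+1) * si := by
        rw [mul_inv_rev, cs.inv_simple]
        calc (z ^ k * si) * sj * (si * (z ^ k)⁻¹)
            = z ^ k * (si * sj) * (si * (z ^ k)⁻¹) := by group
          _ = z ^ k * z * (z ^ k * si) := by rw [← hz, simple_conj_pow_inv cs i j k]
          _ = (z ^ (k+1) * z ^ k) * si := by rw [← pow_succ, mul_assoc]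
          _ = z ^ (2*k+1) * si := by rw [← pow_add]; congr 2; omega
      congr 1
      · apply if_congr _ rfl rfl
        rw [conj_eq_iff, hc1]
      · apply if_congr _ rfl rfl
        rw [show si⁻¹ * ((z ^ k)⁻¹ * x * z ^ k) * si = (z ^ k * si)⁻¹ * x * (z ^ k * si) by
          rw [mul_inv_rev]; group]
        rw [conj_eq_iff, hc2]
    have hshift : ∀ m : ℕ, (if x = z ^ (M.M i j + m) * si then (1:ZMod 2) else 0)
        = (if x = z ^ m * si then (1:ZMod 2) else 0) := by
      intro m
      rw [add_comm, pow_add, hzM, mul_one]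
    rw [Finset.sum_congr rfl (fun k _ => hterm k),
      sum_pair (fun m => if x = z ^ m * si then (1:ZMod 2) else 0) (M.M i j),
      sum_range_double (fun m => if x = z ^ m * si then (1:ZMod 2) else 0) (M.M i j),
      Finset.sum_congr rfl (fun m _ => hshift m)]
    exact CharTwo.add_self_eq_zero _
  · show z ^ M.M i j = (1 : EtaG W).g
    rw [hzM]; rfl

/-- the cocycle homomorphism -/
noncomputable def etaHom : W →* EtaG W := cs.lift ⟨etaF cs, etaF_liftable cs⟩

/-- `eta cs w t = 1` iff `t` is a left inversion of `w`. -/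
noncomputable def eta (w : W) : W → ZMod 2 := (etaHom cs w).f

/-- second component projection -/
def etaProj : EtaG W →* W where
  toFun a := a.g
  map_one' := rfl
  map_mul' _ _ := rfl

lemma etaHom_g (w : W) : (etaHom cs w).g = w := by
  have h : (etaProj).comp (etaHom cs) = MonoidHom.id W := by
    apply cs.ext_simple
    intro i
    show ((etaHom cs) (cs.simple i)).g = cs.simple i
    unfold etaHom
    rw [cs.lift_apply_simple]
    rfl
  exact DFunLike.congr_fun h w

lemma eta_simple (i : B) (t : W) :
    eta cs (cs.simple i) t = if t = cs.simple i then 1 else 0 := by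
  unfold eta etaHom
  rw [cs.lift_apply_simple]
  rfl

lemma eta_mul (u v : W) (t : W) :
    eta cs (u * v) t = eta cs u t + eta cs v (u⁻¹ * t * u) := by
  unfold eta
  rw [map_mul, EtaG.mul_f, etaHom_g]

lemma eta_one (t : W) : eta cs 1 t = 0 := by
  unfold eta
  rw [map_one]
  rfl

lemma eta_wordProd (ω : List B) (t : W) :
    eta cs (cs.wordProd ω) t
      = ((cs.leftInvSeq ω).map (fun c => if t = c then (1 : ZMod 2) else 0)).sum := by
  induction ω using List.reverseRecOn with
  | nil => simp [eta_one]
  | append_singleton ω i ih =>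
      rw [← List.concat_eq_append, cs.wordProd_concat, cs.leftInvSeq_concat, eta_mul, ih,
        List.concat_eq_append, List.map_append, List.sum_append]
      simp only [List.map_cons, List.map_nil, List.sum_cons, List.sum_nil, add_zero]
      congr 1
      rw [eta_simple]
      apply if_congr _ rfl rfl
      rw [conj_eq_iff]

lemma eta_eq_one_isLeftInversion {w t : W} (h : eta cs w t = 1) :
    cs.IsLeftInversion w t := by
  obtain ⟨ω, hred, rfl⟩ := cs.exists_reduced_word' w
  have hsum := (eta_wordProd cs ω t).symm
  rw [h] at hsum
  have hmem : t ∈ cs.leftInvSeq ω := by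
    by_contra hmem
    have : ((cs.leftInvSeq ω).map (fun c => if t = c then (1 : ZMod 2) else 0)).sum = 0 := by
      apply List.sum_eq_zero
      intro x hx
      obtain ⟨c, hc, rfl⟩ := List.mem_map.mp hx
      rw [if_neg]
      intro hh
      exact hmem (hh ▸ hc)
    rw [this] at hsum
    exact absurd hsum (by decide)
  exact cs.isLeftInversion_of_mem_leftInvSeq hred hmem

lemma zmod2_cases (x : ZMod 2) : x = 0 ∨ x = 1 := by
  revert x; decide

/-- the key converse, for any `t` with `t * t = 1` and `eta t t = 1`. -/
lemma eta_eq_one_of_lt {w t : W} (htt : t * t = 1) (hself : eta cs t t = 1)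
    (h : cs.length (t * w) < cs.length w) : eta cs w t = 1 := by
  rcases zmod2_cases (eta cs w t) with h0 | h1
  · exfalso
    have h1 : eta cs (t * w) t = 1 := by
      rw [eta_mul]
      have harg : t⁻¹ * t * t = t := by
        rw [inv_mul_cancel, one_mul]
      rw [harg, hself, h0, add_zero]
    have h2 := (eta_eq_one_isLeftInversion cs h1).2
    rw [← mul_assoc, htt, one_mul] at h2
    omega
  · exact h1

lemma eta_eq_zero_of_gt {w t : W} (h : ¬ cs.length (t * w) < cs.length w) :
    eta cs w t = 0 := by
  rcases zmod2_cases (eta cs w t) with h0 | h1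
  · exact h0
  · exact absurd (eta_eq_one_isLeftInversion cs h1).2 h

end EtaPart

/-! ### Part D : dihedral combinatorics -/

section DihedralPart
open CoxeterSystem

variable {B W : Type*} [Group W] {M : CoxeterMatrix B} (cs : CoxeterSystem M W)

/-- alternating word, letters `d₀ d₁ d₀ ⋯` (append style). -/
def altL (d₀ d₁ : B) : ℕ → List B
  | 0 => []
  | (l+1) => (altL d₀ d₁ l).concat (if Even l then d₀ else d₁)

noncomputable def Aw (d₀ d₁ : B) (l : ℕ) : W := cs.wordProd (altL d₀ d₁ l)

variable (d₀ d₁ : B)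

lemma Aw_zero : Aw cs d₀ d₁ 0 = 1 := by
  unfold Aw altL; exact cs.wordProd_nil

lemma Aw_succ (l : ℕ) :
    Aw cs d₀ d₁ (l+1) = Aw cs d₀ d₁ l * cs.simple (if Even l then d₀ else d₁) := by
  unfold Aw
  rw [show altL d₀ d₁ (l+1) = (altL d₀ d₁ l).concat (if Even l then d₀ else d₁) from rfl,
    cs.wordProd_concat]

lemma altL_length (l : ℕ) : (altL d₀ d₁ l).length = l := by
  induction l with
  | zero => rfl
  | succ l ih => unfold altL; rw [List.length_concat, ih]

lemma length_Aw_le (l : ℕ) : cs.length (Aw cs d₀ d₁ l) ≤ l := by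
  have := cs.length_wordProd_le (altL d₀ d₁ l)
  rwa [altL_length] at this

lemma Aw_eq_pow : ∀ b : ℕ,
    Aw cs d₀ d₁ (2*b) = (cs.simple d₀ * cs.simple d₁)^b ∧
    Aw cs d₀ d₁ (2*b+1) = (cs.simple d₀ * cs.simple d₁)^b * cs.simple d₀ := by
  intro b
  induction b with
  | zero =>
      constructor
      · rw [show 2*0 = 0 by ring, Aw_zero, pow_zero]
      · rw [show 2*0+1 = 0+1 by ring, Aw_succ, Aw_zero, pow_zero, one_mul, one_mul, if_pos]
        exact Even.zero
  | succ b ih =>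
      have h1 : Aw cs d₀ d₁ (2*(b+1)) = (cs.simple d₀ * cs.simple d₁)^(b+1) := by
        rw [show 2*(b+1) = (2*b+1)+1 by ring, Aw_succ, ih.2, if_neg (by simp [Nat.even_add_one,
          parity_simps]), pow_succ, mul_assoc]
      constructor
      · exact h1
      · rw [show 2*(b+1)+1 = (2*(b+1))+1 by ring, Aw_succ, h1, if_pos (by simp [parity_simps])]

/-- conjugation formula, even case -/
lemma conj_even (k : ℕ) :
    (cs.simple d₀ * cs.simple d₁)^k * cs.simple d₀ * ((cs.simple d₀ * cs.simple d₁)^k)⁻¹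
      = (cs.simple d₀ * cs.simple d₁)^(2*k) * cs.simple d₀ := by
  rw [mul_assoc, simple_conj_pow_inv cs d₀ d₁ k, ← mul_assoc, ← pow_add, two_mul]

/-- conjugation formula, odd case -/
lemma conj_odd (k : ℕ) :
    ((cs.simple d₀ * cs.simple d₁)^k * cs.simple d₀) * cs.simple d₁ *
        (((cs.simple d₀ * cs.simple d₁)^k) * cs.simple d₀)⁻¹
      = (cs.simple d₀ * cs.simple d₁)^(2*k+1) * cs.simple d₀ := by
  set z := cs.simple d₀ * cs.simple d₁ with hz
  rw [mul_inv_rev, cs.inv_simple]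
  calc (z ^ k * cs.simple d₀) * cs.simple d₁ * (cs.simple d₀ * (z ^ k)⁻¹)
      = z ^ k * (cs.simple d₀ * cs.simple d₁) * (cs.simple d₀ * (z ^ k)⁻¹) := by group
    _ = z ^ k * z * (z ^ k * cs.simple d₀) := by rw [← hz, simple_conj_pow_inv cs d₀ d₁ k]
    _ = (z ^ (k+1) * z ^ k) * cs.simple d₀ := by rw [← pow_succ, mul_assoc]
    _ = z ^ (2*k+1) * cs.simple d₀ := by rw [← pow_add]; congr 2; omega

/-- the next left-inversion candidate of an alternating word -/
lemma Aw_conj (l : ℕ) :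
    Aw cs d₀ d₁ l * cs.simple (if Even l then d₀ else d₁) * (Aw cs d₀ d₁ l)⁻¹
      = (cs.simple d₀ * cs.simple d₁)^l * cs.simple d₀ := by
  rcases Nat.even_or_odd l with he | ho
  · obtain ⟨b, hb⟩ := he
    have hb' : l = 2*b := by omega
    subst hb'
    rw [if_pos (by simp [parity_simps]), (Aw_eq_pow cs d₀ d₁ b).1, conj_even]
  · obtain ⟨b, hb⟩ := ho
    subst hb
    rw [if_neg (by simp [parity_simps]), (Aw_eq_pow cs d₀ d₁ b).2, conj_odd]

lemma Aw_conj_sq (l : ℕ) :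
    ((cs.simple d₀ * cs.simple d₁)^l * cs.simple d₀) *
      ((cs.simple d₀ * cs.simple d₁)^l * cs.simple d₀) = 1 := by
  rw [← Aw_conj cs d₀ d₁ l]
  set v := Aw cs d₀ d₁ l
  set c := cs.simple (if Even l then d₀ else d₁) with hc
  calc (v * c * v⁻¹) * (v * c * v⁻¹) = v * (c * c) * v⁻¹ := by group
    _ = 1 := by rw [cs.simple_mul_simple_self, mul_one, mul_inv_cancel]

lemma eta_Aw (l : ℕ) (t : W) :
    eta cs (Aw cs d₀ d₁ l) t
      = ∑ q ∈ Finset.range l,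
          (if t = (cs.simple d₀ * cs.simple d₁)^q * cs.simple d₀ then (1 : ZMod 2) else 0) := by
  induction l with
  | zero => rw [Aw_zero, eta_one, Finset.range_zero, Finset.sum_empty]
  | succ l ih =>
      rw [Aw_succ, eta_mul, ih, Finset.sum_range_succ, eta_simple]
      congr 1
      apply if_congr _ rfl rfl
      rw [conj_eq_iff, Aw_conj]

lemma zpow_s0_eq_iff (a c : ℕ) :
    (cs.simple d₀ * cs.simple d₁)^a * cs.simple d₀
        = (cs.simple d₀ * cs.simple d₁)^c * cs.simple d₀
      ↔ ((orderOf (cs.simple d₀ * cs.simple d₁) : ℤ)) ∣ ((a:ℤ) - (c:ℤ)) := by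
  rw [mul_left_inj]
  constructor
  · intro h
    apply orderOf_dvd_iff_zpow_eq_one.mpr
    rw [zpow_sub, zpow_natCast, zpow_natCast, h, mul_inv_cancel]
  · intro h
    have h2 := orderOf_dvd_iff_zpow_eq_one.mp h
    rw [zpow_sub, zpow_natCast, zpow_natCast] at h2
    exact mul_inv_eq_one.mp h2

lemma dvd_small_zero {n : ℕ} {a : ℤ} (h : (n:ℤ) ∣ a) (h2 : a.natAbs < n ∨ n = 0) : a = 0 := by
  rcases h2 with h2 | h2
  · exact Int.eq_zero_of_dvd_of_natAbs_lt_natAbs h (by simpa using h2)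
  · subst h2; simpa using h

lemma eta_Aw_self (l : ℕ)
    (hl : l + 1 ≤ orderOf (cs.simple d₀ * cs.simple d₁)
      ∨ orderOf (cs.simple d₀ * cs.simple d₁) = 0) :
    eta cs ((cs.simple d₀ * cs.simple d₁)^l * cs.simple d₀)
      ((cs.simple d₀ * cs.simple d₁)^l * cs.simple d₀) = 1 := by
  have h1 : (cs.simple d₀ * cs.simple d₁)^l * cs.simple d₀ = Aw cs d₀ d₁ (2*l+1) :=
    ((Aw_eq_pow cs d₀ d₁ l).2).symm
  rw [h1, eta_Aw, ← h1]
  have hcong : ∀ q ∈ Finset.range (2*l+1),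
      (if (cs.simple d₀ * cs.simple d₁)^l * cs.simple d₀
          = (cs.simple d₀ * cs.simple d₁)^q * cs.simple d₀ then (1:ZMod 2) else 0)
        = (if q = l then (1:ZMod 2) else 0) := by
    intro q hq
    rw [Finset.mem_range] at hq
    apply if_congr _ rfl rfl
    rw [zpow_s0_eq_iff]
    constructor
    · intro h
      have := dvd_small_zero h (hl.imp (fun hl => by omega) (fun hl => hl))
      omega
    · intro h; subst h; simp
  rw [Finset.sum_congr rfl hcong, Finset.sum_ite_eq' (Finset.range (2*l+1)) l (fun _ => (1:ZMod 2)),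
    if_pos (by rw [Finset.mem_range]; omega)]

lemma eta_Aw_top (l : ℕ)
    (hl : l + 1 ≤ orderOf (cs.simple d₀ * cs.simple d₁)
      ∨ orderOf (cs.simple d₀ * cs.simple d₁) = 0) :
    eta cs (Aw cs d₀ d₁ l) ((cs.simple d₀ * cs.simple d₁)^l * cs.simple d₀) = 0 := by
  rw [eta_Aw]
  apply Finset.sum_eq_zero
  intro q hq
  rw [Finset.mem_range] at hq
  rw [if_neg]
  intro h
  have h2 := (zpow_s0_eq_iff cs d₀ d₁ l q).mp h
  have := dvd_small_zero h2 (hl.imp (fun hl => by omega) (fun hl => hl))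
  omega

lemma length_Aw (l : ℕ)
    (hl : l ≤ orderOf (cs.simple d₀ * cs.simple d₁)
      ∨ orderOf (cs.simple d₀ * cs.simple d₁) = 0) :
    cs.length (Aw cs d₀ d₁ l) = l := by
  induction l with
  | zero => rw [Aw_zero, cs.length_one]
  | succ l ih =>
      have hl' : l ≤ orderOf (cs.simple d₀ * cs.simple d₁)
          ∨ orderOf (cs.simple d₀ * cs.simple d₁) = 0 :=
        hl.imp (fun h => by omega) (fun h => h)
      have hll := hl
      have ihl := ih hl'
      rw [Aw_succ]
      rcases cs.length_mul_simple (Aw cs d₀ d₁ l) (if Even l then d₀ else d₁) with h | h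
      · rw [h, ihl]
      · exfalso
        set t := (cs.simple d₀ * cs.simple d₁)^l * cs.simple d₀ with ht
        have htw : t * Aw cs d₀ d₁ l = Aw cs d₀ d₁ l * cs.simple (if Even l then d₀ else d₁) := by
          rw [ht, ← Aw_conj cs d₀ d₁ l]; group
        have hlt : cs.length (t * Aw cs d₀ d₁ l) < cs.length (Aw cs d₀ d₁ l) := by
          rw [htw]; omega
        have h1 := eta_eq_one_of_lt cs (Aw_conj_sq cs d₀ d₁ l) (eta_Aw_self cs d₀ d₁ l hll) hlt
        rw [eta_Aw_top cs d₀ d₁ l hll] at h1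
        exact absurd h1 (by decide)

end DihedralPart

/-! ### Part D2 : normal forms, coverage, coset additivity -/

section DihedralPart2
open CoxeterSystem

variable {B W : Type*} [Group W] {M : CoxeterMatrix B} (cs : CoxeterSystem M W)

lemma eta_inv (v u : W) : eta cs v⁻¹ u = eta cs v (v * u * v⁻¹) := by
  have h0 := eta_mul cs v v⁻¹ (v * u * v⁻¹)
  rw [mul_inv_cancel, eta_one] at h0
  have harg : v⁻¹ * (v * u * v⁻¹) * v = u := by group
  rw [harg] at h0
  rcases zmod2_cases (eta cs v (v*u*v⁻¹)) with h | h <;>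
    rcases zmod2_cases (eta cs v⁻¹ u) with h2 | h2 <;>
    rw [h, h2] at h0 ⊢ <;> first | rfl | (exfalso; revert h0; decide)

lemma eta_self_conj (v ρ : W) (h : eta cs ρ ρ = 1) :
    eta cs (v * ρ * v⁻¹) (v * ρ * v⁻¹) = 1 := by
  set t := v * ρ * v⁻¹ with htdef
  rw [eta_mul cs (v*ρ) v⁻¹, eta_mul cs v ρ]
  have h1 : v⁻¹ * t * v = ρ := by rw [htdef]; group
  have h2 : (v*ρ)⁻¹ * t * (v*ρ) = ρ := by rw [htdef]; group
  rw [h1, h2, eta_inv cs v ρ, ← htdef, h]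
  rcases zmod2_cases (eta cs v t) with h3 | h3 <;> rw [h3] <;> decide

variable (d₀ d₁ : B)

lemma s0_conj_z (c : ℤ) :
    cs.simple d₀ * (cs.simple d₀ * cs.simple d₁)^c
      = (cs.simple d₀ * cs.simple d₁)^(-c) * cs.simple d₀ := by
  have hconj : cs.simple d₀ * (cs.simple d₀ * cs.simple d₁) * (cs.simple d₀)⁻¹
      = (cs.simple d₀ * cs.simple d₁)⁻¹ := by
    rw [cs.inv_simple, show cs.simple d₀ * (cs.simple d₀ * cs.simple d₁) * cs.simple d₀
      = (cs.simple d₀ * cs.simple d₀) * (cs.simple d₁ * cs.simple d₀) by group,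
      cs.simple_mul_simple_self, one_mul, mul_inv_rev, cs.inv_simple, cs.inv_simple]
  have hc := map_zpow (MulAut.conj (cs.simple d₀)) (cs.simple d₀ * cs.simple d₁) c
  rw [show (MulAut.conj (cs.simple d₀)) (cs.simple d₀ * cs.simple d₁)
      = cs.simple d₀ * (cs.simple d₀ * cs.simple d₁) * (cs.simple d₀)⁻¹ from rfl, hconj] at hc
  rw [show (MulAut.conj (cs.simple d₀)) ((cs.simple d₀ * cs.simple d₁)^c)
      = cs.simple d₀ * (cs.simple d₀ * cs.simple d₁)^c * (cs.simple d₀)⁻¹ from rfl] at hc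
  rw [inv_zpow, ← zpow_neg] at hc
  calc cs.simple d₀ * (cs.simple d₀ * cs.simple d₁)^c
      = (cs.simple d₀ * (cs.simple d₀ * cs.simple d₁)^c * (cs.simple d₀)⁻¹) * cs.simple d₀ := by
        group
    _ = (cs.simple d₀ * cs.simple d₁)^(-c) * cs.simple d₀ := by rw [hc]

lemma s1_eq : cs.simple d₁ = (cs.simple d₀ * cs.simple d₁)^(-1 : ℤ) * cs.simple d₀ := by
  rw [zpow_neg_one, mul_inv_rev, cs.inv_simple, cs.inv_simple, mul_assoc,
    cs.simple_mul_simple_self, mul_one]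

lemma closure_nf {x : W}
    (hx : x ∈ Subgroup.closure ({cs.simple d₀, cs.simple d₁} : Set W)) :
    ∃ c : ℤ, x = (cs.simple d₀ * cs.simple d₁)^c
      ∨ x = (cs.simple d₀ * cs.simple d₁)^c * cs.simple d₀ := by
  induction hx using Subgroup.closure_induction with
  | mem x hx =>
      rcases hx with h | h
      · exact ⟨0, Or.inr (by rw [h, zpow_zero, one_mul])⟩
      · rw [Set.mem_singleton_iff] at h
        exact ⟨-1, Or.inr (by rw [h]; exact s1_eq cs d₀ d₁)⟩
  | one => exact ⟨0, Or.inl (by rw [zpow_zero])⟩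
  | mul x y hx hy ihx ihy =>
      obtain ⟨a, ha⟩ := ihx
      obtain ⟨c, hc⟩ := ihy
      rcases ha with ha | ha <;> rcases hc with hc | hc
      · exact ⟨a + c, Or.inl (by rw [ha, hc, zpow_add])⟩
      · exact ⟨a + c, Or.inr (by rw [ha, hc, ← mul_assoc, zpow_add])⟩
      · refine ⟨a - c, Or.inr ?_⟩
        rw [ha, hc, mul_assoc, s0_conj_z, ← mul_assoc, ← zpow_add, sub_eq_add_neg]
      · refine ⟨a - c, Or.inl ?_⟩
        rw [ha, hc, mul_assoc, ← mul_assoc (cs.simple d₀), s0_conj_z, mul_assoc,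
          cs.simple_mul_simple_self, mul_one, ← zpow_add, sub_eq_add_neg]
  | inv x hx ihx =>
      obtain ⟨a, ha⟩ := ihx
      rcases ha with ha | ha
      · exact ⟨-a, Or.inl (by rw [ha, ← zpow_neg])⟩
      · refine ⟨a, Or.inr ?_⟩
        rw [ha, mul_inv_rev, cs.inv_simple, ← zpow_neg, s0_conj_z, neg_neg]

lemma zc_mem (c : ℤ) :
    (cs.simple d₀ * cs.simple d₁)^c ∈ Subgroup.closure ({cs.simple d₀, cs.simple d₁} : Set W) := by
  apply Subgroup.zpow_mem
  apply Subgroup.mul_mem <;> apply Subgroup.subset_closure <;> simp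

lemma zcs_mem (c : ℤ) :
    (cs.simple d₀ * cs.simple d₁)^c * cs.simple d₀
      ∈ Subgroup.closure ({cs.simple d₀, cs.simple d₁} : Set W) := by
  apply Subgroup.mul_mem
  · exact zc_mem cs d₀ d₁ c
  · apply Subgroup.subset_closure; simp

lemma zpow_eq_pow_nat {z : W} {c : ℤ} {b : ℕ} (h : (orderOf z : ℤ) ∣ c - b) :
    z^c = z^(b:ℕ) := by
  have h1 : z ^ (c - (b:ℤ)) = 1 := orderOf_dvd_iff_zpow_eq_one.mp h
  calc z^c = z^(c - (b:ℤ)) * z^((b:ℕ):ℤ) := by rw [← zpow_add]; congr 1; ring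
    _ = z^(b:ℕ) := by rw [h1, one_mul, zpow_natCast]

lemma exists_min_coset (w : W) :
    ∃ v x, x ∈ Subgroup.closure ({cs.simple d₀, cs.simple d₁} : Set W) ∧ w = v * x ∧
      ∀ y ∈ Subgroup.closure ({cs.simple d₀, cs.simple d₁} : Set W),
        cs.length v ≤ cs.length (v * y) := by
  have hne : {m : ℕ | ∃ x ∈ Subgroup.closure ({cs.simple d₀, cs.simple d₁} : Set W),
      cs.length (w * x) = m}.Nonempty := ⟨cs.length w, 1, Subgroup.one_mem _, by rw [mul_one]⟩
  obtain ⟨x₀, hx₀, hlen⟩ := Nat.sInf_mem hne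
  refine ⟨w * x₀, x₀⁻¹, Subgroup.inv_mem _ hx₀, by group, ?_⟩
  intro y hy
  rw [hlen, mul_assoc]
  exact Nat.sInf_le ⟨x₀ * y, Subgroup.mul_mem _ hx₀ hy, rfl⟩

lemma min_add_family (v : W)
    (hv : ∀ y ∈ Subgroup.closure ({cs.simple d₀, cs.simple d₁} : Set W),
      cs.length v ≤ cs.length (v * y)) (l : ℕ)
    (hl : l ≤ orderOf (cs.simple d₀ * cs.simple d₁)
      ∨ orderOf (cs.simple d₀ * cs.simple d₁) = 0) :
    cs.length (v * Aw cs d₀ d₁ l) = cs.length v + l := by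
  induction l with
  | zero => rw [Aw_zero, mul_one, add_zero]
  | succ l ih =>
      have hl' : l ≤ orderOf (cs.simple d₀ * cs.simple d₁)
          ∨ orderOf (cs.simple d₀ * cs.simple d₁) = 0 :=
        hl.imp (fun h => by omega) (fun h => h)
      have ihl := ih hl'
      rw [Aw_succ, ← mul_assoc]
      rcases cs.length_mul_simple (v * Aw cs d₀ d₁ l) (if Even l then d₀ else d₁) with h | h
      · rw [h, ihl]; omega
      · exfalso
        set t := v * ((cs.simple d₀ * cs.simple d₁)^l * cs.simple d₀) * v⁻¹ with htd
        have htw : t * (v * Aw cs d₀ d₁ l)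
            = v * Aw cs d₀ d₁ l * cs.simple (if Even l then d₀ else d₁) := by
          rw [htd, ← Aw_conj cs d₀ d₁ l]; group
        have hlt : cs.length (t * (v * Aw cs d₀ d₁ l)) < cs.length (v * Aw cs d₀ d₁ l) := by
          rw [htw]; omega
        have htt : t * t = 1 := by
          rw [htd]
          have h2 := Aw_conj_sq cs d₀ d₁ l
          calc (v * ((cs.simple d₀ * cs.simple d₁)^l * cs.simple d₀) * v⁻¹) *
              (v * ((cs.simple d₀ * cs.simple d₁)^l * cs.simple d₀) * v⁻¹)
              = v * (((cs.simple d₀ * cs.simple d₁)^l * cs.simple d₀) *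
                  ((cs.simple d₀ * cs.simple d₁)^l * cs.simple d₀)) * v⁻¹ := by group
            _ = 1 := by rw [h2, mul_one, mul_inv_cancel]
        have hself : eta cs t t = 1 := by
          rw [htd]; exact eta_self_conj cs v _ (eta_Aw_self cs d₀ d₁ l hl)
        have h1 := eta_eq_one_of_lt cs htt hself hlt
        rw [eta_mul] at h1
        have harg : v⁻¹ * t * v = (cs.simple d₀ * cs.simple d₁)^l * cs.simple d₀ := by
          rw [htd]; group
        rw [harg, eta_Aw_top cs d₀ d₁ l hl, add_zero] at h1
        have h2 := (eta_eq_one_isLeftInversion cs h1).2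
        have htv : t * v = v * ((cs.simple d₀ * cs.simple d₁)^l * cs.simple d₀) := by
          rw [htd]; group
        rw [htv] at h2
        have hmem : (cs.simple d₀ * cs.simple d₁)^l * cs.simple d₀
            ∈ Subgroup.closure ({cs.simple d₀, cs.simple d₁} : Set W) := by
          have := zcs_mem cs d₀ d₁ (l : ℤ)
          rwa [zpow_natCast] at this
        exact absurd h2 (not_lt.mpr (hv _ hmem))

end DihedralPart2

/-! ### Part D3 : coverage of the dihedral subgroup by reduced alternating words -/

section DihedralPart3
open CoxeterSystem

variable {B W : Type*} [Group W] {M : CoxeterMatrix B} (cs : CoxeterSystem M W)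
variable (d₀ d₁ : B)

lemma nf_cover {x : W}
    (hx : x ∈ Subgroup.closure ({cs.simple d₀, cs.simple d₁} : Set W)) :
    ∃ l : ℕ, (x = Aw cs d₀ d₁ l ∨ x = Aw cs d₁ d₀ l) ∧ cs.length x = l ∧
      (orderOf (cs.simple d₀ * cs.simple d₁) ≠ 0
        → l ≤ orderOf (cs.simple d₀ * cs.simple d₁)) := by
  obtain ⟨c, hc⟩ := closure_nf cs d₀ d₁ hx
  have hinv : cs.simple d₁ * cs.simple d₀ = (cs.simple d₀ * cs.simple d₁)⁻¹ := by
    rw [mul_inv_rev, cs.inv_simple, cs.inv_simple]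
  have horder' : orderOf (cs.simple d₁ * cs.simple d₀)
      = orderOf (cs.simple d₀ * cs.simple d₁) := by
    rw [hinv, orderOf_inv]
  have hAe : ∀ b : ℕ, Aw cs d₀ d₁ (2*b) = (cs.simple d₀ * cs.simple d₁)^(b:ℕ) :=
    fun b => (Aw_eq_pow cs d₀ d₁ b).1
  have hAo : ∀ b : ℕ, Aw cs d₀ d₁ (2*b+1) = (cs.simple d₀ * cs.simple d₁)^(b:ℕ) * cs.simple d₀ :=
    fun b => (Aw_eq_pow cs d₀ d₁ b).2
  have hAe' : ∀ b : ℕ, Aw cs d₁ d₀ (2*b) = (cs.simple d₀ * cs.simple d₁)^(-(b:ℤ)) := by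
    intro b
    rw [(Aw_eq_pow cs d₁ d₀ b).1, hinv, inv_pow, ← zpow_natCast, ← zpow_neg]
  have hAo' : ∀ b : ℕ, Aw cs d₁ d₀ (2*b+1)
      = (cs.simple d₀ * cs.simple d₁)^(-(b:ℤ)-1) * cs.simple d₀ := by
    intro b
    rw [(Aw_eq_pow cs d₁ d₀ b).2, hinv, inv_pow, ← zpow_natCast, ← zpow_neg,
      show (-(b:ℤ)-1) = (-(b:ℤ)) + (-1) by ring, zpow_add, mul_assoc]
    congr 1
    exact s1_eq cs d₀ d₁
  have mk : ∀ (l : ℕ), (x = Aw cs d₀ d₁ l ∨ x = Aw cs d₁ d₀ l) →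
      (l ≤ orderOf (cs.simple d₀ * cs.simple d₁) ∨ orderOf (cs.simple d₀ * cs.simple d₁) = 0) →
      ∃ l : ℕ, (x = Aw cs d₀ d₁ l ∨ x = Aw cs d₁ d₀ l) ∧ cs.length x = l ∧
        (orderOf (cs.simple d₀ * cs.simple d₁) ≠ 0
          → l ≤ orderOf (cs.simple d₀ * cs.simple d₁)) := by
    intro l hside hbound
    refine ⟨l, hside, ?_, fun hne => hbound.resolve_right hne⟩
    rcases hside with h | h
    · rw [h]; exact length_Aw cs d₀ d₁ l hbound
    · rw [h]; exact length_Aw cs d₁ d₀ l (by rw [horder']; exact hbound)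
  by_cases hn : orderOf (cs.simple d₀ * cs.simple d₁) = 0
  · rcases hc with hc | hc
    · by_cases hc0 : 0 ≤ c
      · apply mk (2 * c.toNat) _ (Or.inr hn)
        left
        rw [hc, hAe, ← zpow_natCast]
        congr 1
        omega
      · apply mk (2 * (-c).toNat) _ (Or.inr hn)
        right
        rw [hc, hAe']
        congr 1
        omega
    · by_cases hc0 : 0 ≤ c
      · apply mk (2 * c.toNat + 1) _ (Or.inr hn)
        left
        rw [hc, hAo, ← zpow_natCast]
        congr 2
        omega
      · apply mk (2 * (-c-1).toNat + 1) _ (Or.inr hn)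
        right
        rw [hc, hAo']
        congr 2
        omega
  · set n := orderOf (cs.simple d₀ * cs.simple d₁) with hndef
    have hn' : (0:ℤ) < (n:ℤ) := by exact_mod_cast Nat.pos_of_ne_zero hn
    have hmod := Int.emod_nonneg c (ne_of_gt hn')
    have hmodlt := Int.emod_lt_of_pos c hn'
    set b := (c % (n:ℤ)).toNat with hbdef
    have hbc : ((b:ℤ)) = c % (n:ℤ) := Int.toNat_of_nonneg hmod
    have hdvd : ((n:ℤ)) ∣ c - (b:ℤ) := by
      refine ⟨c / (n:ℤ), ?_⟩
      rw [hbc, Int.emod_def]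
      ring
    have hblt : b < n := by omega
    have hzn : (cs.simple d₀ * cs.simple d₁)^(n:ℕ) = 1 := pow_orderOf_eq_one _
    have hshift : (cs.simple d₀ * cs.simple d₁)^(b:ℕ)
        = (cs.simple d₀ * cs.simple d₁)^((b:ℤ) - (n:ℤ)) := by
      rw [zpow_sub, zpow_natCast, zpow_natCast, hzn, inv_one, mul_one]
    rcases hc with hc | hc
    · have hxb : x = (cs.simple d₀ * cs.simple d₁)^(b:ℕ) := by
        rw [hc]; exact zpow_eq_pow_nat hdvd
      by_cases h2 : 2 * b ≤ n
      · exact mk (2*b) (Or.inl (by rw [hxb, hAe])) (Or.inl h2)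
      · apply mk (2 * (n - b)) _ (Or.inl (by omega))
        right
        rw [hxb, hAe', hshift]
        congr 1
        omega
    · have hxb : x = (cs.simple d₀ * cs.simple d₁)^(b:ℕ) * cs.simple d₀ := by
        rw [hc]
        congr 1
        rw [zpow_eq_pow_nat hdvd]
      by_cases h2 : 2 * b + 1 ≤ n
      · exact mk (2*b+1) (Or.inl (by rw [hxb, hAo])) (Or.inl h2)
      · apply mk (2 * (n - b - 1) + 1) _ (Or.inl (by omega))
        right
        rw [hxb, hAo', hshift]
        congr 2
        omega

end DihedralPart3

/-! ### Part P3 : quantum number identities -/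

section PolyPart3

/-- odd quantum numbers have equal colors -/
lemma qPair_odd_eq : ∀ a : ℕ,
    varX * (qPair (2*a)).2 = varY * (qPair (2*a)).1 ∧ (qPair (2*a+1)).1 = (qPair (2*a+1)).2 := by
  intro a
  induction a with
  | zero => constructor <;> simp [qPair_zero, qPair_one]
  | succ a ih =>
      have h1 : (qPair (2*a+2)).1 = varX * (qPair (2*a+1)).2 - (qPair (2*a)).1 := by
        rw [show 2*a+2 = (2*a)+2 by ring, qPair_add_two]
      have h2 : (qPair (2*a+2)).2 = varY * (qPair (2*a+1)).1 - (qPair (2*a)).2 := by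
        rw [show 2*a+2 = (2*a)+2 by ring, qPair_add_two]
      have heven : varX * (qPair (2*(a+1))).2 = varY * (qPair (2*(a+1))).1 := by
        rw [show 2*(a+1) = 2*a+2 by ring, h1, h2, ih.2]
        linear_combination - ih.1
      constructor
      · exact heven
      · have heven2 : varX * (qPair (2*a+2)).2 = varY * (qPair (2*a+2)).1 := by
          rw [show 2*a+2 = 2*(a+1) by ring]; exact heven
        have h4 : (qPair ((2*a+1)+2)).1 = varX * (qPair (2*a+2)).2 - (qPair (2*a+1)).1 := by
          have := congrArg Prod.fst (qPair_add_two (2*a+1))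
          rw [show 2*a+1+2 = (2*a+1)+2 by ring] at this
          rw [this]
        have h5 : (qPair ((2*a+1)+2)).2 = varY * (qPair (2*a+2)).1 - (qPair (2*a+1)).2 := by
          have := congrArg Prod.snd (qPair_add_two (2*a+1))
          rw [this]
        rw [show 2*(a+1)+1 = (2*a+1)+2 by ring, h4, h5, ih.2]
        linear_combination heven2

lemma qPair_odd_eq' {m : ℕ} (hm : ¬ Even m) : (qPair m).1 = (qPair m).2 := by
  obtain ⟨a, ha⟩ := Nat.odd_iff.mpr (Nat.not_even_iff.mp hm)
  subst ha
  exact (qPair_odd_eq a).2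

/-- cross identity `x·[m+1]_y [m]_y = y·[m+1]_x [m]_x` -/
lemma qCross : ∀ m : ℕ,
    varX * ((qPair (m+1)).2 * (qPair m).2) = varY * ((qPair (m+1)).1 * (qPair m).1) := by
  intro m
  induction m with
  | zero => simp [qPair_zero, qPair_one]
  | succ m ih =>
      have h1 : (qPair (m+2)).1 = varX * (qPair (m+1)).2 - (qPair m).1 :=
        congrArg Prod.fst (qPair_add_two m)
      have h2 : (qPair (m+2)).2 = varY * (qPair (m+1)).1 - (qPair m).2 :=
        congrArg Prod.snd (qPair_add_two m)
      rw [show m+1+1 = m+2 by ring, h1, h2]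
      linear_combination - ih

/-- the determinant identity `[k+2]_x [k]_y = [k+1]_x [k+1]_y - 1` -/
lemma qDet : ∀ m : ℕ,
    (qPair (m+2)).1 * (qPair m).2 = (qPair (m+1)).1 * (qPair (m+1)).2 - 1 := by
  intro m
  induction m with
  | zero => simp [qPair_zero, qPair_one, qPair_add_two]
  | succ m ih =>
      have h0 : (qPair (m+2)).1 = varX * (qPair (m+1)).2 - (qPair m).1 :=
        congrArg Prod.fst (qPair_add_two m)
      have h1 : (qPair (m+3)).1 = varX * (qPair (m+2)).2 - (qPair (m+1)).1 := by
        have := congrArg Prod.fst (qPair_add_two (m+1))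
        rw [show m+1+2 = m+3 by ring] at this
        exact this
      have h2 : (qPair (m+2)).2 = varY * (qPair (m+1)).1 - (qPair m).2 :=
        congrArg Prod.snd (qPair_add_two m)
      have ih2 := ih
      rw [h0] at ih2
      have hcross := qCross m
      rw [show m+1+2 = m+3 by ring, h1, show m+1+1 = m+2 by ring, h0, h2]
      linear_combination ih2 - hcross

variable {k : Type*} [CommRing k]

/-- unit coefficient extracted from the vanishing of `[n]` -/
lemma qUnit {a b : k} {n : ℕ} (hn : 2 ≤ n) (hX : pev a b (qPair n).1 = 0) :
    IsUnit (pev a b (qPair (n-1)).1) := by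
  obtain ⟨m, hm⟩ : ∃ m, n = m + 2 := ⟨n - 2, by omega⟩
  subst hm
  have hdet := congrArg (pev a b) (qDet m)
  simp only [pev, map_sub, map_mul, map_one] at hdet
  simp only [pev] at hX
  rw [hX, zero_mul] at hdet
  have hh : pev a b (qPair (m+1)).1 * pev a b (qPair (m+1)).2 = 1 := by
    simp only [pev]
    linear_combination -hdet
  rw [show m+2-1 = m+1 by omega]
  exact IsUnit.of_mul_eq_one _ hh

end PolyPart3

/-! ### Part T : transport of roots -/

section TransportPart
open CoxeterSystem

lemma pev_varX {k : Type*} [CommRing k] (a b : k) : pev a b varX = a := by simp [pev, varX]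
lemma pev_varY {k : Type*} [CommRing k] (a b : k) : pev a b varY = b := by simp [pev, varY]
lemma pev_one' {k : Type*} [CommRing k] (a b : k) : pev a b 1 = 1 := by simp [pev]
lemma pev_zero' {k : Type*} [CommRing k] (a b : k) : pev a b 0 = 0 := by simp [pev]

lemma grp_shift {G : Type*} [Group G] (x y : G) (n : ℕ) :
    x * (y * x)^n = (x * y)^n * x := by
  induction n with
  | zero => simp
  | succ n ih => rw [pow_succ, ← mul_assoc, ih, pow_succ]; group

variable {B W : Type*} [Group W] [DecidableEq B] {M : CoxeterMatrix B} {cs : CoxeterSystem M W}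
variable {k V : Type*} [CommRing k] [AddCommGroup V] [Module k V]

lemma dAct_apply (R : PreRealization cs k V) (w : W) (f : Module.Dual k V) (x : V) :
    dAct R w f x = f (R.rep w⁻¹ x) := rfl

lemma dAct_one (R : PreRealization cs k V) (f : Module.Dual k V) : dAct R 1 f = f := by
  ext x
  rw [dAct_apply, inv_one, map_one]
  rfl

lemma dAct_mul (R : PreRealization cs k V) (u v : W) (f : Module.Dual k V) :
    dAct R (u * v) f = dAct R u (dAct R v f) := by
  ext x
  rw [dAct_apply, dAct_apply, dAct_apply, mul_inv_rev, map_mul]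
  rfl

lemma dAct_smul (R : PreRealization cs k V) (w : W) (c : k) (f : Module.Dual k V) :
    dAct R w (c • f) = c • dAct R w f := by
  ext x
  rw [dAct_apply]
  simp [dAct_apply]

lemma dAct_sub (R : PreRealization cs k V) (w : W) (f g : Module.Dual k V) :
    dAct R w (f - g) = dAct R w f - dAct R w g := by
  ext x
  rw [dAct_apply]
  simp [dAct_apply]

lemma dAct_simple (R : PreRealization cs k V) (i : B) (f : Module.Dual k V) :
    dAct R (cs.simple i) f = f - f (R.coroot i) • R.root i := by
  ext x
  rw [dAct_apply, cs.inv_simple, R.rep_simple]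
  simp [mul_comm]

/-- the letter prepended at stage `l` -/
def ppLetter (u r : B) (l : ℕ) : B := if Even l then u else r

/-- the prepend-style alternating family ending with `u` -/
noncomputable def PP (cs : CoxeterSystem M W) (u r : B) : ℕ → W
  | 0 => 1
  | (l+1) => cs.simple (ppLetter u r l) * PP cs u r l

lemma PP_succ (u r : B) (l : ℕ) :
    PP cs u r (l+1) = cs.simple (ppLetter u r l) * PP cs u r l := rfl

lemma PP_eq_pow (u r : B) : ∀ b : ℕ,
    PP cs u r (2*b) = (cs.simple r * cs.simple u)^b ∧
    PP cs u r (2*b+1) = (cs.simple u * cs.simple r)^b * cs.simple u := by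
  intro b
  induction b with
  | zero =>
      constructor
      · show PP cs u r 0 = _
        rw [pow_zero]
        rfl
      · show cs.simple (ppLetter u r 0) * PP cs u r 0 = _
        rw [pow_zero, one_mul]
        show cs.simple (ppLetter u r 0) * 1 = _
        rw [mul_one]
        rfl
  | succ b ih =>
      have h1 : PP cs u r (2*(b+1)) = (cs.simple r * cs.simple u)^(b+1) := by
        rw [show 2*(b+1) = (2*b+1)+1 by ring, PP_succ, ih.2,
          show ppLetter u r (2*b+1) = r from if_neg (by simp [parity_simps]),
          ← mul_assoc, grp_shift, pow_succ]
        group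
      constructor
      · exact h1
      · rw [show 2*(b+1)+1 = (2*(b+1))+1 by ring, PP_succ, h1,
          show ppLetter u r (2*(b+1)) = u from if_pos (by simp [parity_simps]),
          grp_shift]

def uIdx (l : ℕ) : ℕ := if Even l then l+1 else l
def vIdx (l : ℕ) : ℕ := if Even l then l else l+1

lemma transport (R : PreRealization cs k V) (u r : B) : ∀ l : ℕ,
    dAct R (PP cs u r l) (R.root r)
      = pev (cartanS R u r) (cartanS R r u) (qPair (uIdx l)).1 • R.root r
        - pev (cartanS R u r) (cartanS R r u) (qPair (vIdx l)).1 • R.root u := by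
  intro l
  induction l with
  | zero =>
      show dAct R 1 (R.root r) = _
      rw [dAct_one, show uIdx 0 = 1 from rfl, show vIdx 0 = 0 from rfl, qPair_one, qPair_zero]
      rw [pev_one', pev_zero', one_smul, zero_smul, sub_zero]
  | succ l ih =>
      rw [PP_succ, dAct_mul, ih]
      rcases Nat.even_or_odd l with he | ho
      · have hLu : ppLetter u r l = u := if_pos he
        have hnel : ¬ Even (l+1) := by simp [Nat.even_add_one, he]
        have hU' : uIdx (l+1) = uIdx l := by simp [uIdx, he, hnel]
        have hul : uIdx l = l+1 := if_pos he
        have hvl : vIdx l = l := if_pos he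
        have hv1 : vIdx (l+1) = l+2 := by simp [vIdx, hnel]
        have hV' : pev (cartanS R u r) (cartanS R r u) (qPair (vIdx (l+1))).1
            = cartanS R u r * pev (cartanS R u r) (cartanS R r u) (qPair (uIdx l)).1
              - pev (cartanS R u r) (cartanS R r u) (qPair (vIdx l)).1 := by
          rw [hv1, hvl, hul,
            show (qPair (l+2)).1 = varX * (qPair (l+1)).2 - (qPair l).1 from
              congrArg Prod.fst (qPair_add_two l),
            ← qPair_odd_eq' hnel]
          simp only [pev, map_sub, map_mul]
          rw [show (MvPolynomial.aeval ![cartanS R u r, cartanS R r u]) varX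
            = cartanS R u r by simp [varX]]
        rw [hLu, dAct_sub, dAct_smul, dAct_smul, dAct_simple R u, dAct_simple R u,
          R.root_coroot_eq_two, show R.root r (R.coroot u) = cartanS R u r from rfl,
          hU', hV']
        module
      · have hLr : ppLetter u r l = r := if_neg (by simp [Nat.not_even_iff_odd.mpr ho])
        have hel : Even (l+1) := by simp [Nat.even_add_one, Nat.not_even_iff_odd.mpr ho]
        have hV' : vIdx (l+1) = vIdx l := by
          simp [vIdx, hel, Nat.not_even_iff_odd.mpr ho]
        have hul : uIdx l = l := if_neg (Nat.not_even_iff_odd.mpr ho)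
        have hvl : vIdx l = l+1 := if_neg (Nat.not_even_iff_odd.mpr ho)
        have hu1 : uIdx (l+1) = l+2 := by simp [uIdx, hel]
        have hU' : pev (cartanS R u r) (cartanS R r u) (qPair (uIdx (l+1))).1
            = cartanS R r u * pev (cartanS R u r) (cartanS R r u) (qPair (vIdx l)).1
              - pev (cartanS R u r) (cartanS R r u) (qPair (uIdx l)).1 := by
          rw [hu1, hvl, hul,
            qPair_odd_eq' (by simp [Nat.even_add_one, hel] : ¬ Even (l+2)),
            show (qPair (l+2)).2 = varY * (qPair (l+1)).1 - (qPair l).2 from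
              congrArg Prod.snd (qPair_add_two l),
            ← qPair_odd_eq' (Nat.not_even_iff_odd.mpr ho)]
          simp only [pev, map_sub, map_mul]
          rw [show (MvPolynomial.aeval ![cartanS R u r, cartanS R r u]) varY
            = cartanS R r u by simp [varY]]
        rw [hLr, dAct_sub, dAct_smul, dAct_smul, dAct_simple R r, dAct_simple R r,
          R.root_coroot_eq_two, show R.root u (R.coroot r) = cartanS R r u from rfl,
          hV', hU']
        module

end TransportPart

/-! ### Part M : rigidity of datum roots for reflection-stable realizations -/

section RigidityPart
open CoxeterSystem

variable {B W : Type*} [Group W] {M : CoxeterMatrix B} {cs : CoxeterSystem M W}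
variable {k V : Type*} [CommRing k] [AddCommGroup V] [Module k V]

lemma Aw_one (c₀ c₁ : B) : Aw cs c₀ c₁ 1 = cs.simple c₀ := by
  rw [show (1:ℕ) = 0+1 from rfl, Aw_succ, Aw_zero, one_mul, if_pos Even.zero]

lemma hR_qPair_zero (R : PreRealization cs k V) (hR : ReflectionStable cs R) (u r : B)
    (hur : u ≠ r) (hn2 : 2 ≤ orderOf (cs.simple u * cs.simple r)) :
    pev (cartanS R u r) (cartanS R r u)
      (qPair (orderOf (cs.simple u * cs.simple r))).1 = 0 := by
  have h := (hR u r hur (by omega) (orderOf (cs.simple u * cs.simple r)) (by omega) dvd_rfl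
    1 le_rfl (by omega)).1
  rw [Nat.div_self (by omega : 0 < orderOf (cs.simple u * cs.simple r)), Nat.cast_one,
    twist_one, qbinomX_one, qX_natCast] at h
  exact h

theorem datum_rigidity (R : PreRealization cs k V) (hR : ReflectionStable cs R) :
    ∀ (N : ℕ) (w : W) (r : B), cs.length w = N →
      cs.length (w * cs.simple r) = cs.length w + 1 →
      (∃ a : B, w * cs.simple r * w⁻¹ = cs.simple a) →
      ∃ (a : B) (μ : kˣ), w * cs.simple r * w⁻¹ = cs.simple a ∧
        dAct R w (R.root r) = (μ : k) • R.root a := by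
  intro N
  induction N using Nat.strong_induction_on with
  | _ N IH =>
    intro w r hN hlen hsimple
    by_cases hw1 : w = 1
    · subst hw1
      refine ⟨r, 1, by rw [one_mul, inv_one, mul_one], ?_⟩
      rw [dAct_one, Units.val_one, one_smul]
    obtain ⟨u, hu⟩ := cs.exists_rightDescent_of_ne_one hw1
    have hu' : cs.length (w * cs.simple u) < cs.length w := hu
    have hsur : cs.simple u ≠ cs.simple r := by
      intro h
      rw [h] at hu'
      omega
    have hurind : u ≠ r := fun h => hsur (by rw [h])
    obtain ⟨v, x, hxmem, hw, hv⟩ := exists_min_coset cs u r w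
    have hv' : ∀ y ∈ Subgroup.closure ({cs.simple r, cs.simple u} : Set W),
        cs.length v ≤ cs.length (v * y) := by
      intro y hy
      apply hv
      rwa [Set.pair_comm]
    have horder2 : orderOf (cs.simple r * cs.simple u)
        = orderOf (cs.simple u * cs.simple r) := by
      rw [show cs.simple r * cs.simple u = (cs.simple u * cs.simple r)⁻¹ by
        rw [mul_inv_rev, cs.inv_simple, cs.inv_simple], orderOf_inv]
    have hadd : ∀ y ∈ Subgroup.closure ({cs.simple u, cs.simple r} : Set W),
        cs.length (v * y) = cs.length v + cs.length y := by
      intro y hy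
      obtain ⟨l, hside, hly, hbound⟩ := nf_cover cs u r hy
      have hb' : l ≤ orderOf (cs.simple u * cs.simple r)
          ∨ orderOf (cs.simple u * cs.simple r) = 0 := by
        by_cases h0 : orderOf (cs.simple u * cs.simple r) = 0
        · right; exact h0
        · left; exact hbound h0
      rcases hside with h | h
      · subst h
        rw [min_add_family cs u r v hv l hb', hly]
      · subst h
        rw [min_add_family cs r u v hv' l (by rw [horder2]; exact hb'), hly]
    have hsumem : cs.simple u ∈ Subgroup.closure ({cs.simple u, cs.simple r} : Set W) := by
      apply Subgroup.subset_closure; simp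
    have hsrmem : cs.simple r ∈ Subgroup.closure ({cs.simple u, cs.simple r} : Set W) := by
      apply Subgroup.subset_closure; simp
    have hxne : x ≠ 1 := by
      intro h1
      rw [h1, mul_one] at hw
      subst hw
      exact absurd (hv _ hsumem) (by omega)
    have hlx : cs.length w = cs.length v + cs.length x := by
      rw [hw]; exact hadd x hxmem
    have hxsr_mem : x * cs.simple r ∈ Subgroup.closure ({cs.simple u, cs.simple r} : Set W) :=
      Subgroup.mul_mem _ hxmem hsrmem
    have hlen2 : cs.length (x * cs.simple r) = cs.length x + 1 := by
      have h1 : cs.length (v * (x * cs.simple r))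
          = cs.length v + cs.length (x * cs.simple r) := hadd _ hxsr_mem
      rw [← mul_assoc, ← hw] at h1
      omega
    obtain ⟨l, hside, hlyx, hboundx⟩ := nf_cover cs u r hxmem
    have hl1 : 1 ≤ l := by
      rcases Nat.eq_zero_or_pos l with h0 | h0
      · exfalso
        subst h0
        rcases hside with h | h
        · exact hxne (by rw [h, Aw_zero])
        · exact hxne (by rw [h, Aw_zero])
      · exact h0
    set ρ := x * cs.simple r * x⁻¹ with hρdef
    have hρmem : ρ ∈ Subgroup.closure ({cs.simple u, cs.simple r} : Set W) := by
      rw [hρdef]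
      exact Subgroup.mul_mem _ (Subgroup.mul_mem _ hxmem hsrmem) (Subgroup.inv_mem _ hxmem)
    obtain ⟨a₀, ha₀⟩ := hsimple
    have hvρ : v * ρ = cs.simple a₀ * v := by
      rw [hρdef, ← ha₀, hw]
      group
    have hρne : ρ ≠ 1 := by
      intro h
      rw [h, mul_one] at hvρ
      have h2 : cs.simple a₀ = 1 := (mul_eq_right.mp hvρ.symm)
      have h3 := cs.length_simple a₀
      rw [h2, cs.length_one] at h3
      omega
    have hρlen : cs.length ρ = 1 := by
      have h1 : cs.length (v * ρ) = cs.length v + cs.length ρ := hadd ρ hρmem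
      have h2 : cs.length (v * ρ) ≤ 1 + cs.length v := by
        rw [hvρ]
        have h3 := cs.length_mul_le (cs.simple a₀) v
        rw [cs.length_simple] at h3
        omega
      have h4 : 1 ≤ cs.length ρ := by
        rcases Nat.eq_zero_or_pos (cs.length ρ) with h | h
        · exact absurd (cs.length_eq_zero_iff.mp h) hρne
        · exact h
      omega
    have hρur : ρ = cs.simple u ∨ ρ = cs.simple r := by
      obtain ⟨l', hside', hlρ', _⟩ := nf_cover cs u r hρmem
      have hl'1 : l' = 1 := by omega
      subst hl'1
      rcases hside' with h | h
      · left; rw [h, Aw_one]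
      · right; rw [h, Aw_one]
    set n := orderOf (cs.simple u * cs.simple r) with hn
    have hn1 : n ≠ 1 := by
      intro h
      have h2 := orderOf_eq_one_iff.mp h
      apply hsur
      have h3 : cs.simple u = (cs.simple r)⁻¹ := eq_inv_of_mul_eq_one_left h2
      rw [h3, cs.inv_simple]
    have hkill : ¬ (n ∣ l) := by
      intro hdvdn
      rcases Nat.eq_zero_or_pos n with h0 | h0
      · rw [h0] at hdvdn
        omega
      · have hnl : n ≤ l := Nat.le_of_dvd (by omega) hdvdn
        obtain ⟨l₂, _, hlen₂, hbound₂⟩ := nf_cover cs u r hxsr_mem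
        have hb2 := hbound₂ (by omega)
        omega
    have hgood : ∀ hd : n ∣ (l+1), l = n - 1 ∧ 2 ≤ n := by
      intro hdvdn
      have hn0 : n ≠ 0 := by
        intro h0
        rw [h0] at hdvdn
        omega
      have hnle : n ≤ l + 1 := Nat.le_of_dvd (by omega) hdvdn
      have hlen : l ≤ n := hboundx hn0
      constructor
      · by_cases hcase : l + 1 = n
        · omega
        · exfalso
          have h5 : l + 1 = n + 1 := by omega
          have h6 : n ∣ 1 := by
            have h7 := Nat.dvd_sub hdvdn (dvd_refl n)
            rwa [show l + 1 - n = 1 by omega] at h7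
          have := Nat.le_of_dvd (by omega) h6
          omega
      · omega
    have hmain : x = PP cs u r l ∧ l = n - 1 ∧ 2 ≤ n ∧ ρ = cs.simple (ppLetter u r l) := by
      rcases hside with h | h
      · rcases Nat.even_or_odd l with he | ho
        · exfalso
          obtain ⟨b, hb⟩ := he
          have hb' : l = 2*b := by omega
          have hbpos : 1 ≤ b := by omega
          have hxz : x = (cs.simple u * cs.simple r)^b := by
            rw [h, hb', (Aw_eq_pow cs u r b).1]
          have hcollapse : x * cs.simple r
              = (cs.simple u * cs.simple r)^(b-1) * cs.simple u := by
            rw [hxz, show b = (b-1)+1 by omega, pow_succ,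
              mul_assoc ((cs.simple u * cs.simple r)^(b-1)),
              mul_assoc (cs.simple u), cs.simple_mul_simple_self, mul_one,
              Nat.add_sub_cancel]
          have hle : cs.length (x * cs.simple r) ≤ 2*(b-1)+1 := by
            rw [hcollapse, ← (Aw_eq_pow cs u r (b-1)).2]
            exact length_Aw_le cs u r _
          omega
        · obtain ⟨b, hb⟩ := ho
          have hxz : x = (cs.simple u * cs.simple r)^b * cs.simple u := by
            rw [h, hb, (Aw_eq_pow cs u r b).2]
          have hxPP : x = PP cs u r l := by rw [hxz, hb, (PP_eq_pow u r b).2]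
          have hρz : ρ = (cs.simple u * cs.simple r)^l * cs.simple u := by
            rw [hρdef, hxz, hb]
            exact conj_odd cs u r b
          rcases hρur with hρu | hρr
          · exfalso
            apply hkill
            have hdvd := (zpow_s0_eq_iff cs u r l 0).mp
              (by rw [pow_zero, one_mul, ← hρz]; exact hρu)
            have h2 : ((n:ℕ):ℤ) ∣ ((l:ℕ):ℤ) := by simpa using hdvd
            exact_mod_cast h2
          · have hstep : (cs.simple u * cs.simple r)^(l+1) * cs.simple u = cs.simple u := by
              rw [pow_succ', mul_assoc, ← hρz, hρr, mul_assoc, cs.simple_mul_simple_self,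
                mul_one]
            have hdvd := (zpow_s0_eq_iff cs u r (l+1) 0).mp
              (by rw [pow_zero, one_mul]; exact hstep)
            have hdn : n ∣ (l+1) := by
              have h2 : ((n:ℕ):ℤ) ∣ (((l+1):ℕ):ℤ) := by simpa using hdvd
              exact_mod_cast h2
            obtain ⟨hl', hn2⟩ := hgood hdn
            exact ⟨hxPP, hl', hn2, by
              rw [show ppLetter u r l = r from if_neg (by rw [hb]; simp [parity_simps]), hρr]⟩
      · rcases Nat.even_or_odd l with he | ho
        · obtain ⟨b, hb⟩ := he
          have hb' : l = 2*b := by omega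
          have hbpos : 1 ≤ b := by omega
          have hxz : x = (cs.simple r * cs.simple u)^b := by
            rw [h, hb', (Aw_eq_pow cs r u b).1]
          have hxPP : x = PP cs u r l := by rw [hxz, hb', (PP_eq_pow u r b).1]
          have hρz : ρ = (cs.simple r * cs.simple u)^(2*b) * cs.simple r := by
            rw [hρdef, hxz]
            exact conj_even cs r u b
          rcases hρur with hρu | hρr
          · have hstep : (cs.simple r * cs.simple u)^(2*b+1) * cs.simple r = cs.simple r := by
              rw [pow_succ', mul_assoc, ← hρz, hρu, mul_assoc, cs.simple_mul_simple_self,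
                mul_one]
            have hdvd := (zpow_s0_eq_iff cs r u (2*b+1) 0).mp
              (by rw [pow_zero, one_mul]; exact hstep)
            rw [horder2] at hdvd
            have hdn : n ∣ (l+1) := by
              have h2 : ((n:ℕ):ℤ) ∣ (((2*b+1):ℕ):ℤ) := by simpa using hdvd
              rw [hb']
              exact_mod_cast h2
            obtain ⟨hl', hn2⟩ := hgood hdn
            exact ⟨hxPP, hl', hn2, by
              rw [show ppLetter u r l = u from if_pos (by rw [hb']; simp [parity_simps]), hρu]⟩
          · exfalso
            apply hkill
            have hdvd := (zpow_s0_eq_iff cs r u (2*b) 0).mp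
              (by rw [pow_zero, one_mul, ← hρz]; exact hρr)
            rw [horder2] at hdvd
            have h2 : ((n:ℕ):ℤ) ∣ (((2*b):ℕ):ℤ) := by simpa using hdvd
            rw [hb']
            exact_mod_cast h2
        · exfalso
          obtain ⟨b, hb⟩ := ho
          have hxz : x = (cs.simple r * cs.simple u)^b * cs.simple r := by
            rw [h, hb, (Aw_eq_pow cs r u b).2]
          have hcollapse : x * cs.simple r = (cs.simple r * cs.simple u)^b := by
            rw [hxz, mul_assoc, cs.simple_mul_simple_self, mul_one]
          have hle : cs.length (x * cs.simple r) ≤ 2*b := by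
            rw [hcollapse, ← (Aw_eq_pow cs r u b).1]
            exact length_Aw_le cs r u _
          omega
    obtain ⟨hxPP, hln, hn2, hρc⟩ := hmain
    have hXn : pev (cartanS R u r) (cartanS R r u) (qPair n).1 = 0 :=
      hR_qPair_zero R hR u r hurind hn2
    have htr := transport R u r l
    have hxtrans : ∃ μ₀ : kˣ, dAct R x (R.root r) = (μ₀ : k) • R.root (ppLetter u r l) := by
      rcases Nat.even_or_odd l with he | ho
      · have hui : uIdx l = l + 1 := if_pos he
        have hvi : vIdx l = l := if_pos he
        rw [hui, hvi, show l + 1 = n by omega, hXn, zero_smul, zero_sub] at htr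
        have hunit : IsUnit (- pev (cartanS R u r) (cartanS R r u) (qPair l).1) := by
          apply IsUnit.neg
          have h2 := qUnit hn2 hXn
          rwa [show n - 1 = l by omega] at h2
        refine ⟨hunit.unit, ?_⟩
        rw [hxPP, htr, show ppLetter u r l = u from if_pos he, hunit.unit_spec]
        exact (neg_smul _ _).symm
      · have hui : uIdx l = l := if_neg (Nat.not_even_iff_odd.mpr ho)
        have hvi : vIdx l = l + 1 := if_neg (Nat.not_even_iff_odd.mpr ho)
        rw [hui, hvi, show l + 1 = n by omega, hXn, zero_smul, sub_zero] at htr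
        have hunit : IsUnit (pev (cartanS R u r) (cartanS R r u) (qPair l).1) := by
          have h2 := qUnit hn2 hXn
          rwa [show n - 1 = l by omega] at h2
        refine ⟨hunit.unit, ?_⟩
        rw [hxPP, htr, show ppLetter u r l = r from if_neg (Nat.not_even_iff_odd.mpr ho),
          hunit.unit_spec]
    obtain ⟨μ₀, hμ₀⟩ := hxtrans
    have hcmem : cs.simple (ppLetter u r l)
        ∈ Subgroup.closure ({cs.simple u, cs.simple r} : Set W) := by
      unfold ppLetter
      split
      · exact hsumem
      · exact hsrmem
    have hlenvc : cs.length (v * cs.simple (ppLetter u r l)) = cs.length v + 1 := by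
      rw [hadd _ hcmem, cs.length_simple]
    have hconj : w * cs.simple r * w⁻¹ = v * cs.simple (ppLetter u r l) * v⁻¹ := by
      rw [← hρc]
      rw [hw, hρdef]
      group
    have hsimplevc : ∃ a, v * cs.simple (ppLetter u r l) * v⁻¹ = cs.simple a :=
      ⟨a₀, by rw [← hconj]; exact ha₀⟩
    have hvlt : cs.length v < N := by
      rw [← hN]
      omega
    obtain ⟨a, μ', hva, hvtrans⟩ := IH (cs.length v) hvlt v (ppLetter u r l) rfl hlenvc
      hsimplevc
    refine ⟨a, μ₀ * μ', ?_, ?_⟩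
    · rw [hconj, hva]
    · rw [hw, dAct_mul, hμ₀, dAct_smul, hvtrans, smul_smul, Units.val_mul]

end RigidityPart

/-! ### Part A : coroot rigidity -/

section CorootPart
open CoxeterSystem

variable {B W : Type*} [Group W] {M : CoxeterMatrix B} {cs : CoxeterSystem M W}
variable {k V : Type*} [CommRing k] [AddCommGroup V] [Module k V]

lemma coroot_rigidity (R : PreRealization cs k V) (w : W) (r a : B) (μ : kˣ)
    (ha : w * cs.simple r * w⁻¹ = cs.simple a)
    (hroot : dAct R w (R.root r) = (μ : k) • R.root a) :
    R.rep w (R.coroot r) = ((μ⁻¹ : kˣ) : k) • R.coroot a := by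
  obtain ⟨y₀, hy₀⟩ := R.root_surjective a 1
  have hww : ∀ y : V, R.rep w (R.rep w⁻¹ y) = y := by
    intro y
    have h : (R.rep w * R.rep w⁻¹) y = y := by
      rw [← map_mul, mul_inv_cancel, map_one]
      rfl
    exact h
  have hop : ∀ y : V, y - (R.root a y) • R.coroot a
      = y - (dAct R w (R.root r)) y • R.rep w (R.coroot r) := by
    intro y
    rw [← R.rep_simple, ← ha]
    show R.rep (w * cs.simple r * w⁻¹) y = _
    rw [map_mul, map_mul]
    show R.rep w (R.rep (cs.simple r) (R.rep w⁻¹ y)) = _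
    rw [R.rep_simple, map_sub, map_smul, hww]
    rfl
  have h2 := hop y₀
  rw [hy₀, one_smul, hroot] at h2
  have h4 := sub_right_injective h2
  rw [LinearMap.smul_apply, hy₀, smul_eq_mul, mul_one] at h4
  rw [h4, smul_smul, show ((μ⁻¹ : kˣ) : k) * (μ : k) = 1 from Units.inv_mul μ, one_smul]

end CorootPart


/-- Here `b : W → W` is the descent of `b_L` to `W` (well defined by
Statement 1), so that `SLcirc cs act L b` is the set `S_L°` of endosimple reflections,
the canonical generating set of the reflection subgroup `W_L°`. -/
theorem statement_13 [IsDomain k] [Module.Free k V] [Module.Finite k V]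
    (cs : CoxeterSystem M W) (act : O → W → O)
    (hact_one : ∀ L : O, act L 1 = L)
    (hact_mul : ∀ (L : O) (u v : W), act L (u * v) = act (act L u) v)
    (L : O) (b : W → W)
    (hb : ∀ ω : List B, b (cs.wordProd ω) = bword cs act L ω)
    (R : PreRealization cs k V) (hR : ReflectionStable cs R) :
    ∀ (wm : W → W) (rm : W → B),
      IsReflectionDatum cs (SLcirc cs act L b) wm rm →
      ∀ s' ∈ SLcirc cs act L b, ∀ t' ∈ SLcirc cs act L b,
        s' ≠ t' → orderOf (s' * t') ≠ 0 →
        ∀ j : ℕ, 1 ≤ j → j ≤ orderOf (s' * t') - 1 →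
          pev (cartan R wm rm s' t') (cartan R wm rm t' s')
              (qbinomX (orderOf (s' * t')) j) = 0 ∧
          pev (cartan R wm rm s' t') (cartan R wm rm t' s')
              (qbinomY (orderOf (s' * t')) j) = 0 := by
  intro wm rm hdatum s' hs' t' ht' hst hord j hj1 hj2
  have hs'len : cs.length s' = 1 := by
    have h1 := hs'.2
    unfold ellL at h1
    rw [hs'.1.2, cs.length_one] at h1
    omega
  have ht'len : cs.length t' = 1 := by
    have h1 := ht'.2
    unfold ellL at h1
    rw [ht'.1.2, cs.length_one] at h1
    omega
  obtain ⟨i, hi⟩ := cs.length_eq_one_iff.mp hs'len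
  obtain ⟨i', hi'⟩ := cs.length_eq_one_iff.mp ht'len
  obtain ⟨hconj_s, hlen_s⟩ := hdatum s' hs'
  obtain ⟨hconj_t, hlen_t⟩ := hdatum t' ht'
  have hlen_s' : cs.length (wm s' * cs.simple (rm s')) = cs.length (wm s') + 1 := by
    rcases cs.length_mul_simple (wm s') (rm s') with h | h
    · exact h
    · omega
  have hlen_t' : cs.length (wm t' * cs.simple (rm t')) = cs.length (wm t') + 1 := by
    rcases cs.length_mul_simple (wm t') (rm t') with h | h
    · exact h
    · omega
  obtain ⟨p, μs, hpa, hproot⟩ := datum_rigidity R hR (cs.length (wm s')) (wm s') (rm s') rfl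
    hlen_s' ⟨i, by rw [← hconj_s]; exact hi⟩
  obtain ⟨q, μt, hqa, hqroot⟩ := datum_rigidity R hR (cs.length (wm t')) (wm t') (rm t') rfl
    hlen_t' ⟨i', by rw [← hconj_t]; exact hi'⟩
  have hsp : s' = cs.simple p := hconj_s.trans hpa
  have htq : t' = cs.simple q := hconj_t.trans hqa
  have hpcor : R.rep (wm s') (R.coroot (rm s')) = ((μs⁻¹ : kˣ) : k) • R.coroot p :=
    coroot_rigidity R _ _ _ _ hpa hproot
  have hqcor : R.rep (wm t') (R.coroot (rm t')) = ((μt⁻¹ : kˣ) : k) • R.coroot q :=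
    coroot_rigidity R _ _ _ _ hqa hqroot
  have hc1 : cartan R wm rm s' t' = ((μt * μs⁻¹ : kˣ) : k) * cartanS R p q := by
    show (dAct R (wm t') (R.root (rm t'))) (R.rep (wm s') (R.coroot (rm s'))) = _
    rw [hqroot, hpcor, LinearMap.smul_apply, map_smul, smul_eq_mul, smul_eq_mul,
      Units.val_mul]
    show (μt : k) * (((μs⁻¹ : kˣ) : k) * R.root q (R.coroot p)) = _
    rw [show cartanS R p q = R.root q (R.coroot p) from rfl]
    ring
  have hc2 : cartan R wm rm t' s' = ((μs * μt⁻¹ : kˣ) : k) * cartanS R q p := by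
    show (dAct R (wm s') (R.root (rm s'))) (R.rep (wm t') (R.coroot (rm t'))) = _
    rw [hproot, hqcor, LinearMap.smul_apply, map_smul, smul_eq_mul, smul_eq_mul,
      Units.val_mul]
    show (μs : k) * (((μt⁻¹ : kˣ) : k) * R.root p (R.coroot q)) = _
    rw [show cartanS R q p = R.root p (R.coroot q) from rfl]
    ring
  have hpq : p ≠ q := by
    intro h
    exact hst (by rw [hsp, htq, h])
  have hordpq : orderOf (cs.simple p * cs.simple q) = orderOf (s' * t') := by
    rw [hsp, htq]
  have hm1 : orderOf (s' * t') ≠ 1 := by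
    intro h
    have h2 := orderOf_eq_one_iff.mp h
    apply hst
    have h3 : t' = s'⁻¹ := by
      have h4 : s'⁻¹ * (s' * t') = t' := by group
      rw [← h4, h2, mul_one]
    rw [h3, hsp, cs.inv_simple]
  have hm2 : 2 ≤ orderOf (s' * t') := by omega
  have hRfull := hR p q hpq (by rw [hordpq]; exact hord) (orderOf (s' * t'))
    (by omega) (by rw [hordpq]) j hj1 hj2
  have hdiv : (orderOf (cs.simple p * cs.simple q) / orderOf (s' * t') : ℕ) = 1 := by
    rw [hordpq]
    exact Nat.div_self (by omega)
  have h0X : pev (cartanS R p q) (cartanS R q p) (qbinomX (orderOf (s' * t')) j) = 0 := by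
    have h := hRfull.1
    rw [hdiv, Nat.cast_one, twist_one] at h
    exact h
  have h0Y : pev (cartanS R p q) (cartanS R q p) (qbinomY (orderOf (s' * t')) j) = 0 := by
    have h := hRfull.2
    rw [hdiv, Nat.cast_one, twist_one] at h
    exact h
  have hjm : j ≤ orderOf (s' * t') := by omega
  constructor
  · have hsc := pev_qbinomX_scale (orderOf (s' * t')) j hjm (cartanS R p q) (cartanS R q p)
      (μt * μs⁻¹) h0X
    rw [show (μt * μs⁻¹)⁻¹ = μs * μt⁻¹ by rw [mul_inv_rev, inv_inv]] at hsc
    rw [hc1, hc2]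
    exact hsc
  · have hsc := pev_qbinomY_scale (orderOf (s' * t')) j hjm (cartanS R p q) (cartanS R q p)
      (μt * μs⁻¹) h0Y
    rw [show (μt * μs⁻¹)⁻¹ = μs * μt⁻¹ by rw [mul_inv_rev, inv_inv]] at hsc
    rw [hc1, hc2]
    exact hsc

end PaperStmt
end
end

section
/- Let (W,S) be a Coxeter system and h a pre-realization of W over an integral domain k of crystallographic (Kac–Moody) type: for all distinct s,t ∈ S with m_{s,t} < ∞, assume m_{s,t} ∈ {2,3,4,6} and that there exist integers a, b whose images in k are a_{s,t} and a_{t,s}, with (a,b) = (0,0) if m_{s,t} = 2; (a,b) = (−1,−1) if m_{s,t} = 3; (a,b) ∈ {(−1,−2),(−2,−1)} if m_{s,t} = 4; and (a,b) ∈ {(−1,−3),(−3,−1)} if m_{s,t} = 6. Then h is a reflection-stable Abe realization: for all distinct s,t ∈ S with m_{s,t} < ∞ and every divisor v > 1 of m_{s,t}, binom(v,k)_{x(m_{s,t}/v)}(a_{s,t}, a_{t,s}) = 0 = binom(v,k)_{y(m_{s,t}/v)}(a_{s,t}, a_{t,s}) for all 1 ≤ k ≤ v−1. -/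
/-!
Statement 15: a pre-realization of crystallographic (Kac–Moody) type is a reflection-stable
Abe realization.
-/

attribute [local instance] Classical.propDecidable

noncomputable section

namespace PaperStmt

variable {B W : Type*} [Group W] {M : CoxeterMatrix B}

variable {k V : Type*} [CommRing k] [AddCommGroup V] [Module k V] {cs : CoxeterSystem M W}

section AuxQuantum

/-- Evaluation `ℤ[x,y] → ℤ` at `x ↦ a`, `y ↦ b`, as a ring hom. -/
def zev (a b : ℤ) : A2 →+* ℤ := (MvPolynomial.aeval ![a,b]).toRingHom

@[simp] lemma zev_varX (a b : ℤ) : zev a b varX = a := by simp [zev, varX]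
@[simp] lemma zev_varY (a b : ℤ) : zev a b varY = b := by simp [zev, varY]

lemma qPair_succ_succ (n : ℕ) : qPair (n+2) =
      (varX * (qPair (n + 1)).2 - (qPair n).1,
        varY * (qPair (n + 1)).1 - (qPair n).2) := by rw [qPair]

@[simp] lemma qP0 : qPair 0 = (0,0) := rfl
@[simp] lemma qP1 : qPair 1 = (1,1) := rfl
@[simp] lemma qP2 : qPair 2 = (varX, varY) := by
  have h := qPair_succ_succ 0; norm_num at h; exact h
@[simp] lemma qP3 : qPair 3 = (varX*varY - 1, varY*varX - 1) := by
  have h := qPair_succ_succ 1; norm_num at h; exact h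
@[simp] lemma qP4 : qPair 4 = (varX*(varY*varX-1) - varX, varY*(varX*varY-1) - varY) := by
  have h := qPair_succ_succ 2; norm_num at h; exact h
@[simp] lemma qP5 : qPair 5 = (varX*(varY*(varX*varY-1) - varY) - (varX*varY - 1),
    varY*(varX*(varY*varX-1) - varX) - (varY*varX - 1)) := by
  have h := qPair_succ_succ 3; norm_num at h; exact h
@[simp] lemma qP6 : qPair 6 = (varX*(varY*(varX*(varY*varX-1) - varX) - (varY*varX - 1)) - (varX*(varY*varX-1) - varX),
    varY*(varX*(varY*(varX*varY-1) - varY) - (varX*varY - 1)) - (varY*(varX*varY-1) - varY)) := by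
  have h := qPair_succ_succ 4; norm_num at h; exact h

lemma qX_ofNat (n : ℕ) : qX (n : ℤ) = (qPair n).1 := by simp [qX]
lemma qY_ofNat (n : ℕ) : qY (n : ℤ) = (qPair n).2 := by simp [qY]

/-- Evaluation of a twist composes. -/
lemma zev_twist (a b d : ℤ) (p : A2) :
    zev a b (twist d p) = zev (zev a b (twX d)) (zev a b (twY d)) p := by
  induction p using MvPolynomial.induction_on with
  | C r => simp [twist, zev]
  | add p q hp hq => simp [twist, zev] at hp hq ⊢; rw [hp, hq]
  | mul_X p i hp =>
      rw [show twist d (p * MvPolynomial.X i) = twist d p * twist d (MvPolynomial.X i) from map_mul _ _ _,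
        map_mul, map_mul, hp]
      congr 1
      fin_cases i <;> simp [twist, zev, varX, varY]

/-- Evaluation at integer points factors through `ℤ`. -/
lemma pev_intCast {k : Type*} [CommRing k] (a b : ℤ) (p : A2) :
    pev ((a : ℤ) : k) ((b : ℤ) : k) p = ((zev a b p : ℤ) : k) := by
  induction p using MvPolynomial.induction_on with
  | C r => simp [pev, zev]
  | add p q hp hq => simp only [pev, zev, map_add] at hp hq ⊢; rw [hp, hq]; push_cast; ring
  | mul_X p i hp =>
      simp only [pev, zev, map_mul] at hp ⊢
      rw [hp]; push_cast; congr 1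
      fin_cases i <;> simp [pev, zev]

lemma zev_qbinomX_eq_zero {v j : ℕ} {A B : ℤ}
    (hD : zev A B (∏ i ∈ Finset.range j, qX ((i : ℤ) + 1)) ≠ 0)
    (hN : zev A B (∏ i ∈ Finset.range j, qX ((v : ℤ) - (i : ℤ))) = 0) :
    zev A B (qbinomX v j) = 0 := by
  unfold qbinomX
  split
  · next h =>
      have hs := h.choose_spec
      have := congrArg (zev A B) hs
      rw [map_mul, hN] at this
      exact (mul_eq_zero.mp this).resolve_right hD
  · simp

lemma zev_qbinomY_eq_zero {v j : ℕ} {A B : ℤ}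
    (hD : zev A B (∏ i ∈ Finset.range j, qY ((i : ℤ) + 1)) ≠ 0)
    (hN : zev A B (∏ i ∈ Finset.range j, qY ((v : ℤ) - (i : ℤ))) = 0) :
    zev A B (qbinomY v j) = 0 := by
  unfold qbinomY
  split
  · next h =>
      have hs := h.choose_spec
      have := congrArg (zev A B) hs
      rw [map_mul, hN] at this
      exact (mul_eq_zero.mp this).resolve_right hD
  · simp

lemma qX_ofNatLit (n : ℕ) [n.AtLeastTwo] : qX (OfNat.ofNat n : ℤ) = (qPair n).1 := by
  rw [show (OfNat.ofNat n : ℤ) = ((n:ℕ):ℤ) from (Nat.cast_ofNat).symm, qX_ofNat]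
lemma qY_ofNatLit (n : ℕ) [n.AtLeastTwo] : qY (OfNat.ofNat n : ℤ) = (qPair n).2 := by
  rw [show (OfNat.ofNat n : ℤ) = ((n:ℕ):ℤ) from (Nat.cast_ofNat).symm, qY_ofNat]

@[simp] lemma zev_qX0 (a b : ℤ) : zev a b (qX 0) = 0 := by simp [qX]
@[simp] lemma zev_qX1 (a b : ℤ) : zev a b (qX 1) = 1 := by
  rw [show (1:ℤ) = ((1:ℕ):ℤ) from Nat.cast_one.symm, qX_ofNat]; simp
@[simp] lemma zev_qX2 (a b : ℤ) : zev a b (qX 2) = a := by rw [qX_ofNatLit]; simp; try ring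
@[simp] lemma zev_qX3 (a b : ℤ) : zev a b (qX 3) = a*b - 1 := by rw [qX_ofNatLit]; simp; try ring
@[simp] lemma zev_qX4 (a b : ℤ) : zev a b (qX 4) = a*(b*a-1) - a := by rw [qX_ofNatLit]; simp; try ring
@[simp] lemma zev_qX5 (a b : ℤ) : zev a b (qX 5) = a*(b*(a*b-1) - b) - (a*b - 1) := by
  rw [qX_ofNatLit]; simp; try ring
@[simp] lemma zev_qX6 (a b : ℤ) :
    zev a b (qX 6) = a*(b*(a*(b*a-1) - a) - (b*a - 1)) - (a*(b*a-1) - a) := by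
  rw [qX_ofNatLit]; simp; try ring
@[simp] lemma zev_qY0 (a b : ℤ) : zev a b (qY 0) = 0 := by simp [qY]
@[simp] lemma zev_qY1 (a b : ℤ) : zev a b (qY 1) = 1 := by
  rw [show (1:ℤ) = ((1:ℕ):ℤ) from Nat.cast_one.symm, qY_ofNat]; simp
@[simp] lemma zev_qY2 (a b : ℤ) : zev a b (qY 2) = b := by rw [qY_ofNatLit]; simp; try ring
@[simp] lemma zev_qY3 (a b : ℤ) : zev a b (qY 3) = b*a - 1 := by rw [qY_ofNatLit]; simp; try ring
@[simp] lemma zev_qY4 (a b : ℤ) : zev a b (qY 4) = b*(a*b-1) - b := by rw [qY_ofNatLit]; simp; try ring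
@[simp] lemma zev_qY5 (a b : ℤ) : zev a b (qY 5) = b*(a*(b*a-1) - a) - (b*a - 1) := by
  rw [qY_ofNatLit]; simp; try ring
@[simp] lemma zev_qY6 (a b : ℤ) :
    zev a b (qY 6) = b*(a*(b*(a*b-1) - b) - (a*b - 1)) - (b*(a*b-1) - b) := by
  rw [qY_ofNatLit]; simp; try ring

@[simp] lemma zev_twX1 (a b : ℤ) : zev a b (twX 1) = a := by
  simp [twX]; try norm_num
@[simp] lemma zev_twX2 (a b : ℤ) : zev a b (twX 2) = a*b - 2 := by
  simp [twX]; try norm_num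
  try ring
@[simp] lemma zev_twX3 (a b : ℤ) : zev a b (twX 3) = a*(b*a-1) - 2*a := by
  simp [twX]; try norm_num
  try ring
@[simp] lemma zev_twY1 (a b : ℤ) : zev a b (twY 1) = b := by
  simp [twY]; try norm_num
@[simp] lemma zev_twY2 (a b : ℤ) : zev a b (twY 2) = b*a - 2 := by
  simp [twY]; try norm_num
  try ring
@[simp] lemma zev_twY3 (a b : ℤ) : zev a b (twY 3) = b*(a*b-1) - 2*b := by
  simp [twY]; try norm_num
  try ring


lemma qbinomX_vanish (A B : ℤ) (v j : ℕ) (hj1 : 1 ≤ j) (hj2 : j ≤ v - 1)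
    (h0 : zev A B (qX ((v:ℕ) : ℤ)) = 0)
    (hD : ∀ i : ℕ, i < v - 1 → zev A B (qX ((i:ℤ)+1)) ≠ 0) :
    zev A B (qbinomX v j) = 0 := by
  apply zev_qbinomX_eq_zero
  · rw [map_prod]
    refine Finset.prod_ne_zero_iff.mpr ?_
    intro i hi
    exact hD i (lt_of_lt_of_le (Finset.mem_range.mp hi) (by omega))
  · rw [map_prod]
    apply Finset.prod_eq_zero (Finset.mem_range.mpr (by omega : 0 < j))
    simpa using h0

lemma qbinomY_vanish (A B : ℤ) (v j : ℕ) (hj1 : 1 ≤ j) (hj2 : j ≤ v - 1)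
    (h0 : zev A B (qY ((v:ℕ) : ℤ)) = 0)
    (hD : ∀ i : ℕ, i < v - 1 → zev A B (qY ((i:ℤ)+1)) ≠ 0) :
    zev A B (qbinomY v j) = 0 := by
  apply zev_qbinomY_eq_zero
  · rw [map_prod]
    refine Finset.prod_ne_zero_iff.mpr ?_
    intro i hi
    exact hD i (lt_of_lt_of_le (Finset.mem_range.mp hi) (by omega))
  · rw [map_prod]
    apply Finset.prod_eq_zero (Finset.mem_range.mpr (by omega : 0 < j))
    simpa using h0

end AuxQuantum

set_option maxHeartbeats 1000000 in
theorem statement_15 [IsDomain k] [Module.Free k V] [Module.Finite k V]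
    (cs : CoxeterSystem M W) (R : PreRealization cs k V)
    (hcrys : ∀ s t : B, s ≠ t → orderOf (cs.simple s * cs.simple t) ≠ 0 →
      orderOf (cs.simple s * cs.simple t) ∈ ({2, 3, 4, 6} : Set ℕ) ∧
      ∃ a b : ℤ, (a : k) = cartanS R s t ∧ (b : k) = cartanS R t s ∧
        (orderOf (cs.simple s * cs.simple t) = 2 → a = 0 ∧ b = 0) ∧
        (orderOf (cs.simple s * cs.simple t) = 3 → a = -1 ∧ b = -1) ∧
        (orderOf (cs.simple s * cs.simple t) = 4 →
          (a = -1 ∧ b = -2) ∨ (a = -2 ∧ b = -1)) ∧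
        (orderOf (cs.simple s * cs.simple t) = 6 →
          (a = -1 ∧ b = -3) ∨ (a = -3 ∧ b = -1))) :
    ReflectionStable cs R := by
  intro s t hst hord v hv1 hdvd j hj1 hj2
  obtain ⟨hmem, a, b, ha, hb, h2, h3, h4, h6⟩ := hcrys s t hst hord
  have key : ∀ (d : ℤ) (q : A2), zev a b (twist d q) = 0 →
      pev (cartanS R s t) (cartanS R t s) (twist d q) = 0 := by
    intro d q h
    rw [← ha, ← hb, pev_intCast, h, Int.cast_zero]
  set m := orderOf (cs.simple s * cs.simple t) with hm
  simp only [Set.mem_insert_iff, Set.mem_singleton_iff] at hmem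
  have hvle : v ≤ m := Nat.le_of_dvd (by omega) hdvd
  rcases hmem with h | h | h | h
  · -- m = 2
    obtain ⟨rfl, rfl⟩ := h2 h
    rw [h] at hdvd hvle ⊢
    interval_cases v <;> try omega
    refine ⟨key _ _ ?_, key _ _ ?_⟩ <;> rw [zev_twist]
    · refine qbinomX_vanish _ _ _ _ hj1 hj2 (by norm_num) ?_
      intro i hi; interval_cases i <;> norm_num
    · refine qbinomY_vanish _ _ _ _ hj1 hj2 (by norm_num) ?_
      intro i hi; interval_cases i <;> norm_num
  · -- m = 3
    obtain ⟨rfl, rfl⟩ := h3 h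
    rw [h] at hdvd hvle ⊢
    interval_cases v <;> try omega
    refine ⟨key _ _ ?_, key _ _ ?_⟩ <;> rw [zev_twist]
    · refine qbinomX_vanish _ _ _ _ hj1 hj2 (by norm_num) ?_
      intro i hi; interval_cases i <;> norm_num
    · refine qbinomY_vanish _ _ _ _ hj1 hj2 (by norm_num) ?_
      intro i hi; interval_cases i <;> norm_num
  · -- m = 4
    rw [h] at hdvd hvle ⊢
    rcases h4 h with ⟨rfl, rfl⟩ | ⟨rfl, rfl⟩ <;> (interval_cases v <;> try omega)
    all_goals refine ⟨key _ _ ?_, key _ _ ?_⟩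
    all_goals rw [zev_twist]
    · refine qbinomX_vanish _ _ _ _ hj1 hj2 (by norm_num) ?_
      intro i hi; interval_cases i <;> norm_num
    · refine qbinomY_vanish _ _ _ _ hj1 hj2 (by norm_num) ?_
      intro i hi; interval_cases i <;> norm_num
    · refine qbinomX_vanish _ _ _ _ hj1 hj2 (by norm_num) ?_
      intro i hi; interval_cases i <;> norm_num
    · refine qbinomY_vanish _ _ _ _ hj1 hj2 (by norm_num) ?_
      intro i hi; interval_cases i <;> norm_num
    · refine qbinomX_vanish _ _ _ _ hj1 hj2 (by norm_num) ?_
      intro i hi; interval_cases i <;> norm_num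
    · refine qbinomY_vanish _ _ _ _ hj1 hj2 (by norm_num) ?_
      intro i hi; interval_cases i <;> norm_num
    · refine qbinomX_vanish _ _ _ _ hj1 hj2 (by norm_num) ?_
      intro i hi; interval_cases i <;> norm_num
    · refine qbinomY_vanish _ _ _ _ hj1 hj2 (by norm_num) ?_
      intro i hi; interval_cases i <;> norm_num
  · -- m = 6
    rw [h] at hdvd hvle ⊢
    rcases h6 h with ⟨rfl, rfl⟩ | ⟨rfl, rfl⟩ <;> (interval_cases v <;> try omega)
    all_goals refine ⟨key _ _ ?_, key _ _ ?_⟩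
    all_goals rw [zev_twist]
    · refine qbinomX_vanish _ _ _ _ hj1 hj2 (by norm_num) ?_
      intro i hi; interval_cases i <;> norm_num
    · refine qbinomY_vanish _ _ _ _ hj1 hj2 (by norm_num) ?_
      intro i hi; interval_cases i <;> norm_num
    · refine qbinomX_vanish _ _ _ _ hj1 hj2 (by norm_num) ?_
      intro i hi; interval_cases i <;> norm_num
    · refine qbinomY_vanish _ _ _ _ hj1 hj2 (by norm_num) ?_
      intro i hi; interval_cases i <;> norm_num
    · refine qbinomX_vanish _ _ _ _ hj1 hj2 (by norm_num) ?_
      intro i hi; interval_cases i <;> norm_num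
    · refine qbinomY_vanish _ _ _ _ hj1 hj2 (by norm_num) ?_
      intro i hi; interval_cases i <;> norm_num
    · refine qbinomX_vanish _ _ _ _ hj1 hj2 (by norm_num) ?_
      intro i hi; interval_cases i <;> norm_num
    · refine qbinomY_vanish _ _ _ _ hj1 hj2 (by norm_num) ?_
      intro i hi; interval_cases i <;> norm_num
    · refine qbinomX_vanish _ _ _ _ hj1 hj2 (by norm_num) ?_
      intro i hi; interval_cases i <;> norm_num
    · refine qbinomY_vanish _ _ _ _ hj1 hj2 (by norm_num) ?_
      intro i hi; interval_cases i <;> norm_num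
    · refine qbinomX_vanish _ _ _ _ hj1 hj2 (by norm_num) ?_
      intro i hi; interval_cases i <;> norm_num
    · refine qbinomY_vanish _ _ _ _ hj1 hj2 (by norm_num) ?_
      intro i hi; interval_cases i <;> norm_num

end PaperStmt
end
end
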